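/- arXiv:1812.11872 — 12 statements merged into one kernel-verified Lean document; each statement's English description precedes it below -/
import Mathlib

section
/- If G is a simple graph on n vertices with |E(G)| > n²/4, then G contains a triangle (three mutually adjacent vertices). -/
/-! Mantel's theorem is the case `r = 2` of Turán's theorem: a `K_{r+1}`-free graph on `n` vertices
has at most as many edges as the Turán graph `T(n, r)`, which has at most `(r - 1) n² / (2r)` edges. -/

open Finset

namespace SimpleGraph

variable {V : Type*} [Fintype V] {G : SimpleGraph V} [DecidableRel G.Adj] {r : ℕ}

theorem CliqueFree.mul_card_edgeFinset_le (hG : G.CliqueFree (r + 1)) :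
    2 * r * #G.edgeFinset ≤ (r - 1) * Fintype.card V ^ 2 := by
  rcases r.eq_zero_or_pos with rfl | hr
  · simp
  obtain ⟨H, _, hH⟩ := exists_isTuranMaximal (V := V) hr
  obtain ⟨e⟩ := (isTuranMaximal_iff_nonempty_iso_turanGraph hr).mp hH
  calc 2 * r * #G.edgeFinset ≤ 2 * r * #(turanGraph (Fintype.card V) r).edgeFinset :=
        Nat.mul_le_mul_left _ (e.card_edgeFinset_eq ▸ hH.2 hG)
    _ ≤ (r - 1) * Fintype.card V ^ 2 := mul_card_edgeFinset_turanGraph_le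

end SimpleGraph

theorem mantel {V : Type*} [Fintype V] (G : SimpleGraph V)
    (h : (G.edgeSet.ncard : ℝ) > (Fintype.card V : ℝ) ^ 2 / 4) :
    ∃ a b c : V, G.Adj a b ∧ G.Adj b c ∧ G.Adj a c := by
  classical
  by_contra hG
  have hfree : G.CliqueFree 3 := fun s hs ↦ by
    obtain ⟨a, b, c, hab, hac, hbc, -⟩ := SimpleGraph.is3Clique_iff.mp hs
    exact hG ⟨a, b, c, hab, hbc, hac⟩
  have hbound : 4 * #G.edgeFinset ≤ Fintype.card V ^ 2 := by
    simpa using hfree.mul_card_edgeFinset_le (r := 2)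
  rw [Set.ncard_eq_toFinset_card' G.edgeSet, ← SimpleGraph.edgeFinset] at h
  have hbound_real : (4 * #G.edgeFinset : ℝ) ≤ Fintype.card V ^ 2 := by exact_mod_cast hbound
  linarith
end

section
/- Let G be a simple graph and let P be the set of pairs of distinct vertices {x, y} ⊆ V(G) such that N(x) ∩ N(y) ≠ ∅, i.e., x and y have a common neighbour. If M is a maximal matching in G, then |P| ≥ |E(G)| − |M|. -/
/-!
By maximality every edge `e = vx` outside `M` meets an edge `f = vy` of `M`, and then `xy` is a
pair with common neighbour `v`. Fix an injective rank on `Sym2 V` and always take for `f` the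
least-ranked edge of `M` meeting `e`. Then `e ↦ xy` is injective: if `e₁, e₂` have the same image,
their chosen edges either share a vertex, hence coincide since `M` is a matching, or each meets the
other's edge, hence coincide by minimality; and `e` is recovered from `f` and `xy`.
-/

open Function

namespace Sym2

theorem mk_eq_mk_of_sides_eq {α : Type*} {v₁ v₂ x₁ x₂ y₁ y₂ : α} (hf : s(v₁, y₁) = s(v₂, y₂))
    (hp : s(x₁, y₁) = s(x₂, y₂)) (hvx : v₁ ≠ x₁) (hxy : x₁ ≠ y₁) :
    s(v₁, x₁) = s(v₂, x₂) := by
  rw [Sym2.eq_iff] at hf hp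
  grind

end Sym2

namespace SimpleGraph

variable {V : Type*} (G : SimpleGraph V)

def commonNeighbourPairs : Set (Sym2 V) :=
  {p | ∃ x y, x ≠ y ∧ p = s(x, y) ∧ (G.neighborSet x ∩ G.neighborSet y).Nonempty}

variable {G} (M : Set (Sym2 V)) (rank : Sym2 V → ℕ)

def IsLeastMeeting (e f : Sym2 V) : Prop :=
  MinimalFor (fun f ↦ f ∈ M ∧ ∃ v, v ∈ e ∧ v ∈ f) rank f

def IsPivotPair (e p : Sym2 V) : Prop :=
  ∃ v x y, e = s(v, x) ∧ IsLeastMeeting M rank e s(v, y) ∧ p = s(x, y)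

variable {M rank}

theorem exists_isLeastMeeting (hmax : ∀ e ∈ G.edgeSet, e ∉ M → ∃ f ∈ M, ∃ v, v ∈ e ∧ v ∈ f)
    {e : Sym2 V} (he : e ∈ G.edgeSet) (heM : e ∉ M) : ∃ f, IsLeastMeeting M rank e f :=
  exists_minimalFor_of_wellFoundedLT _ rank (by simpa using hmax e he heM)

theorem IsLeastMeeting.eq (hrank : Injective rank) {e₁ e₂ f₁ f₂ : Sym2 V}
    (h₁ : IsLeastMeeting M rank e₁ f₁) (h₂ : IsLeastMeeting M rank e₂ f₂)
    (h₁₂ : ∃ v, v ∈ e₁ ∧ v ∈ f₂) (h₂₁ : ∃ v, v ∈ e₂ ∧ v ∈ f₁) : f₁ = f₂ :=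
  hrank <| (h₁.le ⟨h₂.prop.1, h₁₂⟩).antisymm (h₂.le ⟨h₁.prop.1, h₂₁⟩)

theorem exists_isPivotPair (hM : M ⊆ G.edgeSet)
    (hmax : ∀ e ∈ G.edgeSet, e ∉ M → ∃ f ∈ M, ∃ v, v ∈ e ∧ v ∈ f)
    {e : Sym2 V} (he : e ∈ G.edgeSet) (heM : e ∉ M) :
    ∃ p ∈ G.commonNeighbourPairs, IsPivotPair M rank e p := by
  obtain ⟨f, hf⟩ := exists_isLeastMeeting (rank := rank) hmax he heM
  obtain ⟨hfM, v, hve, hvf⟩ := hf.prop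
  obtain ⟨x, rfl⟩ := Sym2.mem_iff_exists.mp hve
  obtain ⟨y, rfl⟩ := Sym2.mem_iff_exists.mp hvf
  have hxy : x ≠ y := by
    rintro rfl
    exact heM hfM
  have hvx : G.Adj v x := he
  have hvy : G.Adj v y := hM hfM
  exact ⟨s(x, y), ⟨x, y, hxy, rfl, v, hvx.symm, hvy.symm⟩, v, x, y, rfl, hf, rfl⟩

theorem IsPivotPair.injective (hrank : Injective rank)
    (hdisj : ∀ e ∈ M, ∀ f ∈ M, e ≠ f → ∀ v, v ∈ e → v ∉ f)
    {e₁ e₂ p : Sym2 V} (he₁ : e₁ ∈ G.edgeSet) (he₁M : e₁ ∉ M)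
    (h₁ : IsPivotPair M rank e₁ p) (h₂ : IsPivotPair M rank e₂ p) : e₁ = e₂ := by
  obtain ⟨v₁, x₁, y₁, rfl, hf₁, rfl⟩ := h₁
  obtain ⟨v₂, x₂, y₂, rfl, hf₂, hp⟩ := h₂
  have hvx : v₁ ≠ x₁ := G.ne_of_adj he₁
  have hxy : x₁ ≠ y₁ := by
    rintro rfl
    exact he₁M hf₁.prop.1
  have hf : s(v₁, y₁) = s(v₂, y₂) := by
    rcases Sym2.eq_iff.mp hp with ⟨-, rfl⟩ | ⟨rfl, rfl⟩
    · by_contra hne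
      exact hdisj _ hf₁.prop.1 _ hf₂.prop.1 hne y₁ (Sym2.mem_mk_right _ _) (Sym2.mem_mk_right _ _)
    · exact hf₁.eq hrank hf₂ ⟨x₁, Sym2.mem_mk_right _ _, Sym2.mem_mk_right _ _⟩
        ⟨y₁, Sym2.mem_mk_right _ _, Sym2.mem_mk_right _ _⟩
  exact Sym2.mk_eq_mk_of_sides_eq hf hp hvx hxy

theorem ncard_edgeSet_sdiff_le_ncard_commonNeighbourPairs [Finite V] (hM : M ⊆ G.edgeSet)
    (hdisj : ∀ e ∈ M, ∀ f ∈ M, e ≠ f → ∀ v, v ∈ e → v ∉ f)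
    (hmax : ∀ e ∈ G.edgeSet, e ∉ M → ∃ f ∈ M, ∃ v, v ∈ e ∧ v ∈ f) :
    (G.edgeSet \ M).ncard ≤ G.commonNeighbourPairs.ncard := by
  obtain ⟨rank, hrank⟩ := Countable.exists_injective_nat (Sym2 V)
  have hS := (G.edgeSet \ M).toFinite
  have hP := G.commonNeighbourPairs.toFinite
  rw [Set.ncard_eq_toFinset_card _ hS, Set.ncard_eq_toFinset_card _ hP]
  refine Finset.card_le_card_of_forall_subsingleton (IsPivotPair M rank) ?_ ?_
  · intro e he
    rw [Set.Finite.mem_toFinset] at he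
    simpa using exists_isPivotPair hM hmax he.1 he.2
  · intro p _ e₁ he₁ e₂ he₂
    simp only [Set.mem_ofPred_eq, Set.Finite.mem_toFinset] at he₁ he₂
    exact he₁.2.injective hrank hdisj he₁.1.1 he₁.1.2 he₂.2

end SimpleGraph

theorem pairs_with_common_neighbour_count {V : Type*} [Fintype V] (G : SimpleGraph V)
    (M : Set (Sym2 V)) (hM : M ⊆ G.edgeSet)
    (hdisj : ∀ e ∈ M, ∀ f ∈ M, e ≠ f → ∀ v, v ∈ e → v ∉ f)
    (hmax : ∀ e ∈ G.edgeSet, e ∉ M → ∃ f ∈ M, ∃ v, v ∈ e ∧ v ∈ f) :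
    ({p : Sym2 V | ∃ x y : V, x ≠ y ∧ p = s(x, y) ∧
        (G.neighborSet x ∩ G.neighborSet y).Nonempty}.ncard : ℤ) ≥
      (G.edgeSet.ncard : ℤ) - (M.ncard : ℤ) := by
  have hcount := G.ncard_edgeSet_sdiff_le_ncard_commonNeighbourPairs hM hdisj hmax
  rw [← Set.cast_ncard_sdiff hM G.edgeSet.toFinite]
  exact_mod_cast hcount
end

section
/- Let G be a simple graph and let {Z₀, Z₁} be a partition of V(G). Suppose that for i = 0, 1, every vertex z ∈ Zᵢ has the property that N(z) ∩ Z_{1−i} is a clique in G. Then e(Z₀, Z₁) ≤ e(Z₀) + e(Z₁) + (|Z₀| + |Z₁|)/2, where e(Z₀, Z₁) is the number of edges of G with one end in Z₀ and one end in Z₁, and e(Zᵢ) is the number of edges of G with both ends in Zᵢ. -/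
/-!
Let `H` be the graph of edges between `Z₀` and `Z₁`. If `v ∈ Z₀` and `u ∈ Z₁` are adjacent, every
`H`-neighbour of `u` other than `v` lies in the clique `N(u) ∩ Z₀`, hence is a neighbour of `v`
inside `Z₀`; so `d_H(u) ≤ d_{Z₀}(v) + 1`, and symmetrically. It remains to see that in any graph
`∑ d(v) ≤ ∑ f(v)` as soon as `f(v)` bounds the degrees of all neighbours of `v`: summing
`x / y + y / x ≥ 2` over the edges gives `∑ d(v) ≤ ∑_{v ~ u} d(u) / d(v)`, and the inner sum at `v`
is at most `f(v)`.
-/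

/-- Number of edges of `G` with both endpoints in `X`. -/
noncomputable def edgesWithin {V : Type*} (G : SimpleGraph V) (X : Set V) : ℕ :=
  {e ∈ G.edgeSet | ∀ v ∈ e, v ∈ X}.ncard

/-- Number of edges of `G` with one endpoint in `X` and the other in `Y`. -/
noncomputable def edgesBetween {V : Type*} (G : SimpleGraph V) (X Y : Set V) : ℕ :=
  {e ∈ G.edgeSet | ∃ x ∈ X, ∃ y ∈ Y, e = s(x, y)}.ncard

open Finset

lemma two_le_div_add_div {a b : ℝ} (ha : 0 < a) (hb : 0 < b) : 2 ≤ a / b + b / a := by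
  rw [div_add_div _ _ hb.ne' ha.ne', le_div_iff₀ (by positivity)]
  nlinarith [sq_nonneg (a - b)]

namespace SimpleGraph

variable {V : Type*}

lemma edgeSet_between (G : SimpleGraph V) (X Y : Set V) :
    (G.between X Y).edgeSet = {e ∈ G.edgeSet | ∃ x ∈ X, ∃ y ∈ Y, e = s(x, y)} := by
  ext e
  induction e using Sym2.ind with
  | _ a b =>
    simp only [mem_edgeSet, between_adj, Set.mem_ofPred_eq, Sym2.eq_iff]
    constructor
    · rintro ⟨hab, ⟨ha, hb⟩ | ⟨ha, hb⟩⟩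
      · exact ⟨hab, a, ha, b, hb, .inl ⟨rfl, rfl⟩⟩
      · exact ⟨hab, b, hb, a, ha, .inr ⟨rfl, rfl⟩⟩
    · rintro ⟨hab, x, hx, y, hy, ⟨rfl, rfl⟩ | ⟨rfl, rfl⟩⟩
      · exact ⟨hab, .inl ⟨hx, hy⟩⟩
      · exact ⟨hab, .inr ⟨hy, hx⟩⟩

lemma edgesBetween_eq_card_edgeFinset [Fintype V] (G : SimpleGraph V) (X Y : Set V)
    [DecidableRel (G.between X Y).Adj] :
    edgesBetween G X Y = #(G.between X Y).edgeFinset := by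
  rw [edgesBetween, ← edgeSet_between, ← coe_edgeFinset, Set.ncard_coe_finset]

lemma edgesWithin_eq_edgesBetween (G : SimpleGraph V) (X : Set V) :
    edgesWithin G X = edgesBetween G X X := by
  rw [edgesWithin, edgesBetween, ← edgeSet_between]
  congr 1
  ext e
  induction e using Sym2.ind with
  | _ a b => simp [between_adj]

lemma neighborSet_between_subset {G : SimpleGraph V} {A B : Set V} (hAB : Disjoint A B)
    {u v : V} (hu : u ∈ B) (hv : v ∈ A) (huv : G.Adj u v)
    (hclique : G.IsClique (G.neighborSet u ∩ A)) :
    (G.between A B).neighborSet u ⊆ insert v ((G.between A A).neighborSet v) := by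
  rintro w ⟨huw, hw⟩
  have hwA : w ∈ A := by
    rcases hw with ⟨huA, -⟩ | ⟨-, hwA⟩
    · exact absurd hu (hAB.notMem_of_mem_left huA)
    · exact hwA
  rcases eq_or_ne w v with rfl | hwv
  · exact Set.mem_insert w _
  · exact .inr ⟨hclique ⟨huv, hv⟩ ⟨huw, hwA⟩ hwv.symm, .inl ⟨hv, hwA⟩⟩

lemma degree_le_degree_add_one_of_neighborSet_subset [Fintype V] {H K : SimpleGraph V}
    [DecidableRel H.Adj] [DecidableRel K.Adj] {u v : V}
    (h : H.neighborSet u ⊆ insert v (K.neighborSet v)) : H.degree u ≤ K.degree v + 1 := by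
  classical
  rw [← card_neighborFinset_eq_degree, ← card_neighborFinset_eq_degree]
  calc #(H.neighborFinset u) ≤ #(insert v (K.neighborFinset v)) :=
        card_le_card (by simpa [neighborFinset_def] using h)
    _ ≤ #(K.neighborFinset v) + 1 := card_insert_le _ _

lemma sum_neighborFinset_comm [Fintype V] (H : SimpleGraph V) [DecidableRel H.Adj]
    {M : Type*} [AddCommMonoid M] (g : V → V → M) :
    ∑ v, ∑ u ∈ H.neighborFinset v, g v u = ∑ v, ∑ u ∈ H.neighborFinset v, g u v := by
  simp_rw [neighborFinset_eq_filter, sum_filter]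
  rw [sum_comm]
  simp_rw [adj_comm]

theorem sum_degree_le_of_forall_adj_degree_le [Fintype V] (H : SimpleGraph V) [DecidableRel H.Adj]
    (f : V → ℕ) (hf : ∀ v u, H.Adj v u → H.degree u ≤ f v) : ∑ v, H.degree v ≤ ∑ v, f v := by
  set d : V → ℝ := fun v => H.degree v
  have hd_pos {v u : V} (hu : u ∈ H.neighborFinset v) : 0 < d v := by
    simpa [d] using (H.degree_pos_iff_exists_adj v).2 ⟨u, (mem_neighborFinset ..).1 hu⟩
  have hd_sum (v : V) (c : ℝ) : ∑ _u ∈ H.neighborFinset v, c = d v * c := by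
    simp [d, card_neighborFinset_eq_degree]
  have hlower : ∑ v, d v ≤ ∑ v, ∑ u ∈ H.neighborFinset v, d u / d v := by
    have h2 : 2 * ∑ v, d v ≤ ∑ v, ∑ u ∈ H.neighborFinset v, (d u / d v + d v / d u) := by
      rw [mul_sum]
      refine sum_le_sum fun v _ => ?_
      calc 2 * d v = ∑ _u ∈ H.neighborFinset v, 2 := by rw [hd_sum, mul_comm]
        _ ≤ _ := sum_le_sum fun u hu =>
          two_le_div_add_div (hd_pos (H.mem_neighborFinset _ _ |>.2
            ((H.mem_neighborFinset _ _).1 hu).symm)) (hd_pos hu)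
    have hswap : ∑ v, ∑ u ∈ H.neighborFinset v, d v / d u =
        ∑ v, ∑ u ∈ H.neighborFinset v, d u / d v := H.sum_neighborFinset_comm _
    simp only [sum_add_distrib, hswap] at h2
    linarith
  have hupper (v : V) : ∑ u ∈ H.neighborFinset v, d u / d v ≤ f v := by
    rcases (H.neighborFinset v).eq_empty_or_nonempty with h | ⟨u, hu⟩
    · simp [h]
    · rw [← sum_div, div_le_iff₀ (hd_pos hu)]
      calc ∑ u ∈ H.neighborFinset v, d u ≤ ∑ _u ∈ H.neighborFinset v, (f v : ℝ) :=
            sum_le_sum fun u hu => Nat.cast_le.2 (hf v u ((mem_neighborFinset ..).1 hu))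
        _ = f v * d v := by rw [hd_sum, mul_comm]
  have key : ∑ v, (H.degree v : ℝ) ≤ ∑ v, (f v : ℝ) :=
    hlower.trans (sum_le_sum fun v _ => hupper v)
  exact_mod_cast key

end SimpleGraph

open SimpleGraph

theorem bipartite_like_bound {V : Type*} [Fintype V] (G : SimpleGraph V) (Z₀ Z₁ : Set V)
    (hdisj : Disjoint Z₀ Z₁) (hcover : Z₀ ∪ Z₁ = Set.univ)
    (h₀ : ∀ z ∈ Z₀, G.IsClique (G.neighborSet z ∩ Z₁))
    (h₁ : ∀ z ∈ Z₁, G.IsClique (G.neighborSet z ∩ Z₀)) :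
    (edgesBetween G Z₀ Z₁ : ℝ) ≤
      (edgesWithin G Z₀ : ℝ) + (edgesWithin G Z₁ : ℝ) + ((Z₀.ncard : ℝ) + (Z₁.ncard : ℝ)) / 2 := by
  classical
  have hdeg (v u : V) (hvu : (G.between Z₀ Z₁).Adj v u) : (G.between Z₀ Z₁).degree u ≤
      (G.between Z₀ Z₀).degree v + (G.between Z₁ Z₁).degree v + 1 := by
    rcases hvu with ⟨hvu, ⟨hv, hu⟩ | ⟨hv, hu⟩⟩
    · have := degree_le_degree_add_one_of_neighborSet_subset
        (neighborSet_between_subset hdisj hu hv hvu.symm (h₁ u hu))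
      omega
    · have hsub := neighborSet_between_subset hdisj.symm hu hv hvu.symm (h₀ u hu)
      rw [between_comm] at hsub
      have := degree_le_degree_add_one_of_neighborSet_subset hsub
      omega
  have hsum := (G.between Z₀ Z₁).sum_degree_le_of_forall_adj_degree_le _ hdeg
  simp only [sum_add_distrib, sum_degrees_eq_twice_card_edges, sum_const, card_univ, smul_eq_mul,
    mul_one] at hsum
  have hcard : Z₀.ncard + Z₁.ncard = Fintype.card V := by
    rw [← Set.ncard_union_eq hdisj, hcover, Set.ncard_univ, Nat.card_eq_fintype_card]
  rw [edgesWithin_eq_edgesBetween, edgesWithin_eq_edgesBetween, edgesBetween_eq_card_edgeFinset,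
    edgesBetween_eq_card_edgeFinset, edgesBetween_eq_card_edgeFinset]
  have : (2 * #(G.between Z₀ Z₁).edgeFinset : ℝ) ≤ 2 * #(G.between Z₀ Z₀).edgeFinset +
      2 * #(G.between Z₁ Z₁).edgeFinset + (Z₀.ncard + Z₁.ncard) := by
    exact_mod_cast hcard ▸ hsum
  linarith
end

section
/- Let τ = (4 − √7)/9. For every ε > 0 there exist a positive integer n and simple graphs G₁, G₂, G₃ on a common set of n vertices such that there is no rainbow triangle and |E(Gᵢ)| > ((1 + τ²)/4 − ε)·n² for 1 ≤ i ≤ 3. -/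
/-!
Split the vertices into sets `A`, `B`, `C` with `|B| = |C| = ⌊τn⌋`, and take `G₁ = K[A] ∪ K[B]`,
`G₂ = K[A] ∪ K[C]` and `G₃` the complement of `K[A]`. In a rainbow triangle the `G₁`-edge cannot lie
in `B` (no `G₂`-edge meets `B`), so it lies in `A`; its `G₂`-neighbour is then in `A` too, and the
closing `G₃`-edge would lie inside `A`. With `|A| ≈ (1 - 2τ)n` the graphs have about
`((1 - 2τ)² + τ²) n² / 2`, resp. `(1 - (1 - 2τ)²) n² / 2` edges, and both equal `(1 + τ²) n² / 4`
because `9τ² - 8τ + 1 = 0`.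
-/

/-- A rainbow triangle for graphs `G₁ G₂ G₃` on a common vertex set: distinct vertices
`v₁ v₂ v₃` with `v₁v₂ ∈ E(G₁)`, `v₂v₃ ∈ E(G₂)`, `v₃v₁ ∈ E(G₃)`. -/
def HasRainbowTriangle {V : Type*} (G₁ G₂ G₃ : SimpleGraph V) : Prop :=
  ∃ v₁ v₂ v₃ : V, v₁ ≠ v₂ ∧ v₂ ≠ v₃ ∧ v₃ ≠ v₁ ∧
    G₁.Adj v₁ v₂ ∧ G₂.Adj v₂ v₃ ∧ G₃.Adj v₃ v₁
noncomputable def tau : ℝ := (4 - Real.sqrt 7) / 9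

open Finset

namespace SimpleGraph

variable {V : Type*}

def cliqueOn (s : Set V) : SimpleGraph V where
  Adj u v := u ∈ s ∧ v ∈ s ∧ u ≠ v
  symm := ⟨fun _ _ h ↦ ⟨h.2.1, h.1, h.2.2.symm⟩⟩
  loopless := ⟨fun _ h ↦ h.2.2 rfl⟩

@[simp] lemma cliqueOn_adj {s : Set V} {u v : V} :
    (cliqueOn s).Adj u v ↔ u ∈ s ∧ v ∈ s ∧ u ≠ v := Iff.rfl

lemma cliqueOn_univ : cliqueOn (Set.univ : Set V) = ⊤ := by
  ext
  simp

lemma disjoint_cliqueOn {s t : Set V} (h : Disjoint s t) : Disjoint (cliqueOn s) (cliqueOn t) := by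
  rw [← disjoint_edgeSet, Set.disjoint_left, Sym2.forall]
  rintro u v ⟨hu, -⟩ ⟨hu', -⟩
  exact Set.disjoint_left.1 h hu hu'

lemma edgeSet_cliqueOn [DecidableEq V] (s : Finset V) :
    (cliqueOn (s : Set V)).edgeSet = ↑(s.offDiag.image Sym2.mk.uncurry) := by
  ext ⟨u, v⟩
  simp only [mem_edgeSet, cliqueOn_adj, SetLike.mem_coe, coe_image, coe_offDiag, Set.mem_image,
    Set.mem_offDiag, Prod.exists, Function.uncurry_apply_pair, Sym2.eq, Sym2.rel_iff',
    Prod.mk.injEq, Prod.swap_prod_mk]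
  grind

lemma ncard_edgeSet_cliqueOn (s : Finset V) :
    (cliqueOn (s : Set V)).edgeSet.ncard = (#s).choose 2 := by
  classical
  rw [edgeSet_cliqueOn, Set.ncard_coe_finset, Sym2.card_image_offDiag]

lemma ncard_edgeSet_sup [Finite V] {G H : SimpleGraph V} (h : Disjoint G H) :
    (G ⊔ H).edgeSet.ncard = G.edgeSet.ncard + H.edgeSet.ncard := by
  rw [edgeSet_sup, Set.ncard_union_eq (disjoint_edgeSet.2 h)]

lemma ncard_edgeSet_add_ncard_edgeSet_compl [Fintype V] (G : SimpleGraph V) :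
    G.edgeSet.ncard + Gᶜ.edgeSet.ncard = (Fintype.card V).choose 2 := by
  classical
  rw [← ncard_edgeSet_sup disjoint_compl_right, sup_compl_eq_top, ← card_univ,
    ← ncard_edgeSet_cliqueOn, coe_univ, cliqueOn_univ]

theorem not_hasRainbowTriangle_cliqueOn {s t u : Set V} (hst : Disjoint s t) (hsu : Disjoint s u)
    (htu : Disjoint t u) :
    ¬HasRainbowTriangle (cliqueOn s ⊔ cliqueOn t) (cliqueOn s ⊔ cliqueOn u) (cliqueOn s)ᶜ := by
  rintro ⟨v₁, v₂, v₃, -, -, h₃₁, h₁₂ | h₁₂, h₂₃ | h₂₃, h₃⟩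
  · exact (compl_adj _ _ _).1 h₃ |>.2 ⟨h₂₃.2.1, h₁₂.1, h₃₁⟩
  · exact Set.disjoint_left.1 hsu h₁₂.2.1 h₂₃.1
  · exact Set.disjoint_left.1 hst h₂₃.1 h₁₂.2.1
  · exact Set.disjoint_left.1 htu h₁₂.2.1 h₂₃.1

theorem exists_not_hasRainbowTriangle [Fintype V] {a b : ℕ} (h : a + 2 * b ≤ Fintype.card V) :
    ∃ G₁ G₂ G₃ : SimpleGraph V, ¬HasRainbowTriangle G₁ G₂ G₃ ∧
      G₁.edgeSet.ncard = a.choose 2 + b.choose 2 ∧ G₂.edgeSet.ncard = a.choose 2 + b.choose 2 ∧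
      a.choose 2 + G₃.edgeSet.ncard = (Fintype.card V).choose 2 := by
  classical
  obtain ⟨A, -, hA⟩ := exists_subset_card_eq (s := (univ : Finset V)) (n := a)
    (by rw [card_univ]; omega)
  obtain ⟨B, hB, hBcard⟩ := exists_subset_card_eq (s := Aᶜ) (n := b)
    (by rw [card_compl]; omega)
  have hAB : Disjoint A B := subset_compl_iff_disjoint_left.1 hB
  obtain ⟨C, hC, hCcard⟩ := exists_subset_card_eq (s := (A ∪ B)ᶜ) (n := b)
    (by rw [card_compl, card_union_of_disjoint hAB]; omega)
  have hABC : Disjoint (A ∪ B) C := subset_compl_iff_disjoint_left.1 hC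
  rw [disjoint_union_left] at hABC
  refine ⟨_, _, _, not_hasRainbowTriangle_cliqueOn (disjoint_coe.2 hAB) (disjoint_coe.2 hABC.1)
    (disjoint_coe.2 hABC.2), ?_, ?_, ?_⟩
  · rw [ncard_edgeSet_sup (disjoint_cliqueOn (disjoint_coe.2 hAB)), ncard_edgeSet_cliqueOn,
      ncard_edgeSet_cliqueOn, hA, hBcard]
  · rw [ncard_edgeSet_sup (disjoint_cliqueOn (disjoint_coe.2 hABC.1)), ncard_edgeSet_cliqueOn,
      ncard_edgeSet_cliqueOn, hA, hCcard]
  · rw [← hA, ← ncard_edgeSet_cliqueOn, ncard_edgeSet_add_ncard_edgeSet_compl]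

end SimpleGraph

lemma tau_quadratic : 9 * tau ^ 2 - 8 * tau + 1 = 0 := by
  rw [tau]
  nlinarith [Real.sq_sqrt (show (0 : ℝ) ≤ 7 by norm_num)]

lemma tau_nonneg : 0 ≤ tau := by
  rw [tau]
  have : Real.sqrt 7 ≤ 4 := Real.sqrt_le_iff.2 ⟨by norm_num, by norm_num⟩
  linarith

lemma tau_lt_one_fourth : tau < 1 / 4 := by
  rw [tau]
  have : 7 / 4 < Real.sqrt 7 := Real.lt_sqrt_of_sq_lt (by norm_num)
  linarith

lemma two_mul_le_of_le_tau_mul {n b : ℕ} (hb : (b : ℝ) ≤ tau * n) : 2 * b ≤ n := by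
  have : (2 * b : ℝ) ≤ n := by nlinarith [tau_lt_one_fourth, (Nat.cast_nonneg n : (0 : ℝ) ≤ n)]
  exact_mod_cast this

lemma le_choose_two_add_choose_two {n b : ℕ} (hb : (b : ℝ) ≤ tau * n) :
    (1 + tau ^ 2) / 4 * n ^ 2 - 2 * n ≤ (((n - 2 * b).choose 2 + b.choose 2 : ℕ) : ℝ) := by
  have hn : (0 : ℝ) ≤ n := Nat.cast_nonneg n
  -- the quadratic part exceeds its value at `b = τn` by exactly this product
  have hgap : 0 ≤ (tau * n - b) * (2 * n - 5 / 2 * (b + tau * n)) :=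
    mul_nonneg (sub_nonneg.2 hb) (by nlinarith [tau_lt_one_fourth, tau_nonneg])
  push_cast [Nat.cast_choose_two, Nat.cast_sub (two_mul_le_of_le_tau_mul hb)]
  nlinarith [tau_quadratic]

lemma le_choose_two_sub_choose_two {n b : ℕ} (hb : (b : ℝ) ≤ tau * n) (hb' : tau * n < b + 1) :
    (1 + tau ^ 2) / 4 * n ^ 2 - 2 * n ≤ (n.choose 2 : ℝ) - ((n - 2 * b).choose 2 : ℕ) := by
  have hn : (0 : ℝ) ≤ n := Nat.cast_nonneg n
  -- the quadratic part falls short of its value at `b = τn` by exactly this product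
  have hgap : (tau * n - b) * (2 * n - 2 * (b + tau * n)) ≤ 2 * n - 2 * (b + tau * n) :=
    mul_le_of_le_one_left (by nlinarith [tau_lt_one_fourth, tau_nonneg]) (by linarith)
  push_cast [Nat.cast_choose_two, Nat.cast_sub (two_mul_le_of_le_tau_mul hb)]
  nlinarith [tau_quadratic]

theorem rainbow_mantel_sharp (ε : ℝ) (hε : 0 < ε) :
    ∃ n : ℕ, 0 < n ∧ ∃ G₁ G₂ G₃ : SimpleGraph (Fin n),
      ¬ HasRainbowTriangle G₁ G₂ G₃ ∧
      (G₁.edgeSet.ncard : ℝ) > ((1 + tau ^ 2) / 4 - ε) * (n : ℝ) ^ 2 ∧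
      (G₂.edgeSet.ncard : ℝ) > ((1 + tau ^ 2) / 4 - ε) * (n : ℝ) ^ 2 ∧
      (G₃.edgeSet.ncard : ℝ) > ((1 + tau ^ 2) / 4 - ε) * (n : ℝ) ^ 2 := by
  obtain ⟨n, hn⟩ := exists_nat_gt (2 / ε)
  have hεn : 2 < ε * n := (div_lt_iff₀' hε).1 hn
  have hn0 : 0 < n := by
    have : (0 : ℝ) < n := (div_pos two_pos hε).trans hn
    exact_mod_cast this
  have hεn_sq : 2 * n < ε * n ^ 2 := by nlinarith
  set b := ⌊tau * n⌋₊
  have hb : (b : ℝ) ≤ tau * n := Nat.floor_le (mul_nonneg tau_nonneg n.cast_nonneg)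
  have hb' : tau * n < b + 1 := Nat.lt_floor_add_one _
  have h2b := two_mul_le_of_le_tau_mul hb
  obtain ⟨G₁, G₂, G₃, hfree, h₁, h₂, h₃⟩ := SimpleGraph.exists_not_hasRainbowTriangle (V := Fin n)
    (a := n - 2 * b) (b := b) (by rw [Fintype.card_fin]; omega)
  have h₁₂ := le_choose_two_add_choose_two hb
  have h₃' := le_choose_two_sub_choose_two hb hb'
  rw [Fintype.card_fin] at h₃
  refine ⟨n, hn0, G₁, G₂, G₃, hfree, ?_, ?_, ?_⟩
  · rw [h₁]; linarith
  · rw [h₂]; linarith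
  · rw [← h₃] at h₃'
    push_cast at h₃'
    linarith
end

section
/- Let G₁, G₂, G₃ be simple graphs on a common set V of n vertices with no rainbow triangle, and let X ⊆ V be a set of size ℓ such that the induced subgraph G₃[X] has a perfect matching. Then e₁(X, V∖X) + e₂(X, V∖X) ≤ ℓ(n − ℓ), where eᵢ(X, Y) denotes the number of edges of Gᵢ with one end in X and one end in Y. -/
/-- The subgraph of `G` induced on `X` has a perfect matching. -/
def HasPerfectMatchingOn {V : Type*} (G : SimpleGraph V) (X : Set V) : Prop :=
  ∃ M : Set (Sym2 V), M ⊆ G.edgeSet ∧ (∀ e ∈ M, ∀ v ∈ e, v ∈ X) ∧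
    ∀ x ∈ X, ∃! e, e ∈ M ∧ x ∈ e

open Finset in
lemma edgesBetween_eq_sum' {V : Type*} [Fintype V] [DecidableEq V]
    (G : SimpleGraph V) [DecidableRel G.Adj] (X : Set V) [DecidablePred (· ∈ X)] :
    edgesBetween G X Xᶜ
      = ∑ u : V, (Finset.univ.filter fun x => x ∈ X ∧ u ∉ X ∧ G.Adj x u).card := by
  have hset : {e | e ∈ G.edgeSet ∧ ∃ x ∈ X, ∃ y ∈ Xᶜ, e = s(x, y)}
      = (fun p : V × V => s(p.1, p.2)) ''
        {p : V × V | p.1 ∈ X ∧ p.2 ∉ X ∧ G.Adj p.1 p.2} := by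
    ext e
    constructor
    · rintro ⟨heE, x, hx, y, hy, rfl⟩
      exact ⟨(x, y), ⟨hx, hy, (SimpleGraph.mem_edgeSet G).1 heE⟩, rfl⟩
    · rintro ⟨⟨x, y⟩, ⟨h1, h2, h3⟩, rfl⟩
      exact ⟨(SimpleGraph.mem_edgeSet G).2 h3, x, h1, y, h2, rfl⟩
  have hinj : Set.InjOn (fun p : V × V => s(p.1, p.2))
      {p : V × V | p.1 ∈ X ∧ p.2 ∉ X ∧ G.Adj p.1 p.2} := by
    rintro ⟨a, b⟩ ⟨ha, hb, _⟩ ⟨c, d⟩ ⟨hc, hd, _⟩ h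
    simp only [Sym2.eq_iff] at h
    rcases h with ⟨rfl, rfl⟩ | ⟨rfl, rfl⟩
    · rfl
    · exact absurd hc hb
  have hsetF : {p : V × V | p.1 ∈ X ∧ p.2 ∉ X ∧ G.Adj p.1 p.2}
      = ↑(Finset.univ.filter fun p : V × V => p.1 ∈ X ∧ p.2 ∉ X ∧ G.Adj p.1 p.2) := by
    ext p; simp
  rw [edgesBetween, hset, Set.ncard_image_of_injOn hinj, hsetF, Set.ncard_coe_finset]
  rw [Finset.card_eq_sum_card_fiberwise (f := Prod.snd) (t := Finset.univ)
    (fun x _ => Finset.mem_univ _)]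
  refine Finset.sum_congr rfl fun u _ => ?_
  refine Finset.card_bij' (fun p _ => p.1) (fun x _ => (x, u)) ?_ ?_ ?_ ?_
  · rintro ⟨a, b⟩ hp
    simp only [Finset.mem_filter, Finset.mem_univ, true_and] at hp ⊢
    obtain ⟨⟨h1, h2, h3⟩, h4⟩ := hp
    subst h4
    exact ⟨h1, h2, h3⟩
  · intro x hx
    simp only [Finset.mem_filter, Finset.mem_univ, true_and] at hx ⊢
    exact ⟨hx, trivial⟩
  · rintro ⟨a, b⟩ hp
    simp only [Finset.mem_filter] at hp
    simp [hp.2]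
  · intro x hx; rfl

theorem cross_edges_bound_of_perfect_matching {V : Type*} [Fintype V]
    (G₁ G₂ G₃ : SimpleGraph V) (hNR : ¬ HasRainbowTriangle G₁ G₂ G₃)
    (X : Set V) (ℓ : ℕ) (hℓ : X.ncard = ℓ) (hPM : HasPerfectMatchingOn G₃ X) :
    edgesBetween G₁ X Xᶜ + edgesBetween G₂ X Xᶜ ≤ ℓ * (Fintype.card V - ℓ) := by
  classical
  obtain ⟨M, hM1, hM2, hM3⟩ := hPM
  -- extract the matching function
  have hex : ∀ x, x ∈ X → ∃ e, e ∈ M ∧ x ∈ e := fun x hx => (hM3 x hx).exists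
  choose e heM hxe using hex
  let f : V → V := fun x => if hx : x ∈ X then Sym2.Mem.other (hxe x hx) else x
  have hfe : ∀ x (hx : x ∈ X), s(x, f x) = e x hx := by
    intro x hx
    simp only [f, dif_pos hx]
    exact Sym2.other_spec (hxe x hx)
  have hadj : ∀ x ∈ X, G₃.Adj x (f x) := by
    intro x hx
    have := hM1 (heM x hx)
    rw [← hfe x hx] at this
    exact this
  have hfmem : ∀ x (hx : x ∈ X), f x ∈ e x hx := by
    intro x hx
    rw [← hfe x hx]
    exact Sym2.mem_mk_right _ _
  have hfX : ∀ x ∈ X, f x ∈ X := fun x hx => hM2 (e x hx) (heM x hx) (f x) (hfmem x hx)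
  have hinjf : Set.InjOn f X := by
    intro x hx y hy hxy
    have h1 : e x hx = e y hy := by
      refine (hM3 (f x) (hfX x hx)).unique ⟨heM x hx, hfmem x hx⟩ ?_
      rw [hxy]
      exact ⟨heM y hy, hfmem y hy⟩
    have h2 : s(x, f x) = s(y, f x) := by
      rw [hfe x hx, h1, ← hfe y hy, hxy]
    rw [Sym2.eq_iff] at h2
    rcases h2 with ⟨rfl, _⟩ | ⟨h3, rfl⟩
    · rfl
    · exact absurd h3.symm (hadj x hx).ne'
  -- key: no rainbow triangle
  have key : ∀ u ∉ X, ∀ x ∈ X, G₁.Adj x u → ¬ G₂.Adj (f x) u := by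
    intro u hu x hx h1 h2
    exact hNR ⟨x, u, f x, fun h => hu (h ▸ hx), fun h => hu (h.symm ▸ hfX x hx),
      (hadj x hx).ne', h1, h2.symm, (hadj x hx).symm⟩
  -- per-vertex bound
  have hXcard : X.toFinset.card = ℓ := by
    rw [← hℓ, Set.ncard_eq_toFinset_card']
  have hbound : ∀ u : V,
      (Finset.univ.filter fun x => x ∈ X ∧ u ∉ X ∧ G₁.Adj x u).card +
      (Finset.univ.filter fun x => x ∈ X ∧ u ∉ X ∧ G₂.Adj x u).card
      ≤ if u ∈ X then 0 else ℓ := by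
    intro u
    by_cases hu : u ∈ X
    · simp only [hu, if_pos]
      have h1 : (Finset.univ.filter fun x => x ∈ X ∧ u ∉ X ∧ G₁.Adj x u) = ∅ := by
        ext x; simp [hu]
      have h2 : (Finset.univ.filter fun x => x ∈ X ∧ u ∉ X ∧ G₂.Adj x u) = ∅ := by
        ext x; simp [hu]
      simp [h1, h2]
    · rw [if_neg hu]
      set A := Finset.univ.filter fun x => x ∈ X ∧ u ∉ X ∧ G₁.Adj x u with hA
      set B := Finset.univ.filter fun x => x ∈ X ∧ u ∉ X ∧ G₂.Adj x u with hB
      have hBsub : B ⊆ X.toFinset := by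
        intro x hxB
        rw [hB, Finset.mem_filter] at hxB
        rw [Set.mem_toFinset]
        exact hxB.2.1
      have hmaps : ∀ x ∈ A, f x ∈ X.toFinset \ B := by
        intro x hxA
        rw [hA, Finset.mem_filter] at hxA
        obtain ⟨-, hxX, -, hadj1⟩ := hxA
        rw [Finset.mem_sdiff, Set.mem_toFinset]
        refine ⟨hfX x hxX, ?_⟩
        rw [hB, Finset.mem_filter]
        rintro ⟨-, -, -, hadj2⟩
        exact key u hu x hxX hadj1 hadj2
      have hinjA : ∀ x ∈ A, ∀ y ∈ A, f x = f y → x = y := by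
        intro x hxA y hyA
        rw [hA, Finset.mem_filter] at hxA hyA
        exact hinjf hxA.2.1 hyA.2.1
      have h1 : A.card ≤ (X.toFinset \ B).card :=
        Finset.card_le_card_of_injOn f hmaps hinjA
      rw [Finset.card_sdiff_of_subset hBsub, hXcard] at h1
      have h2 : B.card ≤ ℓ := hXcard ▸ Finset.card_le_card hBsub
      omega
  rw [edgesBetween_eq_sum' G₁ X, edgesBetween_eq_sum' G₂ X, ← Finset.sum_add_distrib]
  calc (∑ u : V, ((Finset.univ.filter fun x => x ∈ X ∧ u ∉ X ∧ G₁.Adj x u).card +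
          (Finset.univ.filter fun x => x ∈ X ∧ u ∉ X ∧ G₂.Adj x u).card))
      ≤ ∑ u : V, if u ∈ X then 0 else ℓ := Finset.sum_le_sum fun u _ => hbound u
    _ = ℓ * (Fintype.card V - ℓ) := by
        rw [Finset.sum_ite, Finset.sum_const_zero, Finset.sum_const, zero_add,
          smul_eq_mul]
        have hcompl : (Finset.univ.filter fun u => ¬ u ∈ X) = X.toFinsetᶜ := by
          ext u; simp
        rw [hcompl, Finset.card_compl, hXcard, mul_comm]
end

section
/- Let G₁, G₂, G₃ be simple graphs on a common set V with no rainbow triangle, and let X ⊆ V be a set of size ℓ such that the induced subgraph G₃[X] has a perfect matching. Then e₁(X) + e₂(X) ≤ ℓ²/2, where eᵢ(X) denotes the number of edges of Gᵢ with both ends in X. -/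
/-!
Let `p` swap the two ends of each edge of the perfect matching of `G₃[X]`. For fixed `v`, if `G₂`
joins `v` to `p w` then `G₁` cannot join `v` to `w`, or `w v (p w)` would be a rainbow triangle.
Since `p` permutes `X`, the `G₁`- and `G₂`-degrees of `v` into `X` add up to at most `|X|`, and
summing over `v ∈ X` gives `2 (e₁(X) + e₂(X)) ≤ |X|²`.
-/

open Finset SimpleGraph

section

variable {V : Type*}

lemma two_mul_edgesWithin [Fintype V] (G : SimpleGraph V) [DecidableRel G.Adj]
    (s : Finset V) : 2 * edgesWithin G s = ∑ v ∈ s, #{w ∈ s | G.Adj v w} := by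
  classical
  let H := ((⊤ : G.Subgraph).induce (s : Set V)).spanningCoe
  have hE : {e ∈ G.edgeSet | ∀ v ∈ e, v ∈ (s : Set V)} = H.edgeSet := by
    ext e
    induction e using Sym2.ind
    simp only [SetLike.mem_coe, Set.mem_ofPred_eq, mem_edgeSet, Sym2.mem_iff, forall_eq_or_imp,
      forall_eq, Subgraph.edgeSet_spanningCoe, Subgraph.mem_edgeSet, Subgraph.induce_adj,
      Subgraph.top_adj, H]
    tauto
  have hAdj : ({xy | H.Adj xy.1 xy.2} : Finset (V × V)) = {xy ∈ s ×ˢ s | G.Adj xy.1 xy.2} := by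
    ext ⟨v, w⟩
    simp only [Subgraph.spanningCoe_adj, Subgraph.induce_adj, SetLike.mem_coe,
      Subgraph.top_adj, mem_filter, mem_univ, true_and, mem_product, H]
    tauto
  rw [edgesWithin, hE, ← coe_edgeFinset, Set.ncard_coe_finset, two_mul_card_edgeFinset, hAdj,
    card_filter, sum_product]
  simp only [card_filter]

theorem HasPerfectMatchingOn.exists_involution {G : SimpleGraph V} {X : Set V}
    (h : HasPerfectMatchingOn G X) :
    ∃ p : V → V, (∀ x ∈ X, p x ∈ X) ∧ (∀ x ∈ X, p (p x) = x) ∧ ∀ x ∈ X, G.Adj x (p x) := by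
  obtain ⟨M, hMG, hMX, hMuniq⟩ := h
  have : ∀ x ∈ X, ∃ y, s(x, y) ∈ M := fun x hx => by
    obtain ⟨e, ⟨heM, hxe⟩, -⟩ := hMuniq x hx
    obtain ⟨y, rfl⟩ := Sym2.mem_iff_exists.1 hxe
    exact ⟨y, heM⟩
  choose! p hpM using this
  have hpX : ∀ x ∈ X, p x ∈ X := fun x hx => hMX _ (hpM x hx) _ (Sym2.mem_mk_right x (p x))
  refine ⟨p, hpX, fun x hx => ?_, fun x hx => hMG (hpM x hx)⟩
  have hsame : s(p x, p (p x)) = s(p x, x) :=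
    ((hMuniq _ (hpX x hx)).unique ⟨hpM _ (hpX x hx), Sym2.mem_mk_left _ _⟩
      ⟨hpM x hx, Sym2.mem_mk_right _ _⟩).trans Sym2.eq_swap
  exact Sym2.congr_right.1 hsame

lemma card_adj_add_card_adj_le_card {G₁ G₂ G₃ : SimpleGraph V} [DecidableRel G₁.Adj]
    [DecidableRel G₂.Adj] (hNR : ¬ HasRainbowTriangle G₁ G₂ G₃) {s : Finset V} {p : V → V}
    (hpX : ∀ x ∈ s, p x ∈ s) (hpp : ∀ x ∈ s, p (p x) = x) (hpG : ∀ x ∈ s, G₃.Adj x (p x))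
    (v : V) : #{w ∈ s | G₁.Adj v w} + #{w ∈ s | G₂.Adj v w} ≤ #s := by
  have hswap : #{w ∈ s | G₂.Adj v w} = #{w ∈ s | G₂.Adj v (p w)} :=
    card_nbij' p p (fun w hw => by simp_all) (fun w hw => by simp_all)
      (fun w hw => by simp_all) (fun w hw => by simp_all)
  have hexcl : ∀ w ∈ s, G₂.Adj v (p w) → ¬ G₁.Adj v w := fun w hw h₂ h₁ =>
    hNR ⟨w, v, p w, h₁.ne', h₂.ne, (hpG w hw).ne', h₁.symm, h₂, (hpG w hw).symm⟩
  calc #{w ∈ s | G₁.Adj v w} + #{w ∈ s | G₂.Adj v w}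
      ≤ #{w ∈ s | G₁.Adj v w} + #{w ∈ s | ¬ G₁.Adj v w} := by
        rw [hswap]
        gcongr with w hw
        exact hexcl w hw
    _ = #s := card_filter_add_card_filter_not _

end

theorem inside_edges_bound_of_perfect_matching {V : Type*} [Fintype V]
    (G₁ G₂ G₃ : SimpleGraph V) (hNR : ¬ HasRainbowTriangle G₁ G₂ G₃)
    (X : Set V) (ℓ : ℕ) (hℓ : X.ncard = ℓ) (hPM : HasPerfectMatchingOn G₃ X) :
    (edgesWithin G₁ X : ℝ) + (edgesWithin G₂ X : ℝ) ≤ (ℓ : ℝ) ^ 2 / 2 := by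
  classical
  obtain ⟨p, hpX, hpp, hpG⟩ := hPM.exists_involution
  obtain ⟨s, rfl⟩ : ∃ s : Finset V, ↑s = X := ⟨X.toFinset, X.coe_toFinset⟩
  rw [Set.ncard_coe_finset] at hℓ
  subst hℓ
  have hcount : 2 * (edgesWithin G₁ s + edgesWithin G₂ s) ≤ #s * #s :=
    calc 2 * (edgesWithin G₁ s + edgesWithin G₂ s)
        = ∑ v ∈ s, (#{w ∈ s | G₁.Adj v w} + #{w ∈ s | G₂.Adj v w}) := by
          rw [mul_add, two_mul_edgesWithin, two_mul_edgesWithin, sum_add_distrib]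
      _ ≤ ∑ _v ∈ s, #s := sum_le_sum fun v _ => card_adj_add_card_adj_le_card hNR hpX hpp hpG v
      _ = #s * #s := by rw [sum_const, smul_eq_mul]
  have hcount' : (2 : ℝ) * (edgesWithin G₁ s + edgesWithin G₂ s) ≤ #s * #s := by
    exact_mod_cast hcount
  linarith
end

section
/- Let τ = (4 − √7)/9 and let G₁, G₂, G₃ be simple graphs on a common set V of n vertices with no rainbow triangle satisfying |E(Gᵢ)| + |E(Gⱼ)| ≥ ((1 + τ²)/2)·n² + (3/2)·n for all 1 ≤ i < j ≤ 3. Suppose X ⊆ V is a nonempty proper subset of size ℓ such that Gᵢ[X] has a perfect matching for all 1 ≤ i ≤ 3. Then the graphs G₁ − X, G₂ − X, G₃ − X (induced on V∖X) have no rainbow triangle and satisfy |E(Gᵢ − X)| + |E(Gⱼ − X)| ≥ ((1 + τ²)/2)·(n − ℓ)² + (3/2)·(n − ℓ) for all 1 ≤ i < j ≤ 3. -/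
open Classical in
lemma pair_removed_bound {V : Type*} [Fintype V] (Gi Gj Gk : SimpleGraph V) (X : Set V)
    (hforb : ∀ x y v : V, v ≠ x → v ≠ y → Gk.Adj x y → ¬(Gi.Adj v x ∧ Gj.Adj v y))
    (hPM : HasPerfectMatchingOn Gk X) :
    2 * ({e ∈ Gi.edgeSet | ∃ v ∈ e, v ∈ X}.ncard + {e ∈ Gj.edgeSet | ∃ v ∈ e, v ∈ X}.ncard)
      ≤ X.ncard * X.ncard + 2 * ((Xᶜ : Set V).ncard * X.ncard) := by
  obtain ⟨M, hME, hMX, hMu⟩ := hPM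
  -- uniqueness of partners
  have huniq : ∀ b ∈ X, ∀ c c' : V, s(b, c) ∈ M → s(b, c') ∈ M → c = c' := by
    intro b hb c c' h1 h2
    obtain ⟨e, -, hu⟩ := hMu b hb
    have e1 := hu s(b, c) ⟨h1, by simp⟩
    have e2 := hu s(b, c') ⟨h2, by simp⟩
    rw [← e2] at e1
    exact Sym2.congr_right.mp e1
  have hpart : ∀ b ∈ X, ∃ c : V, s(b, c) ∈ M ∧ c ≠ b ∧ c ∈ X := by
    intro b hb
    obtain ⟨e, ⟨heM, hbe⟩, -⟩ := hMu b hb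
    have hdiag := Gk.not_isDiag_of_mem_edgeSet (hME heM)
    refine ⟨Sym2.Mem.other hbe, ?_, Sym2.other_ne hdiag hbe, ?_⟩
    · rw [Sym2.other_spec hbe]; exact heM
    · exact hMX e heM _ (Sym2.other_mem hbe)
  set p : V → V := fun b => if hb : b ∈ X then (hpart b hb).choose else b with hp
  have hpM : ∀ b ∈ X, s(b, p b) ∈ M := by
    intro b hb; simp only [hp, dif_pos hb]; exact (hpart b hb).choose_spec.1
  have hpX : ∀ b ∈ X, p b ∈ X := by
    intro b hb; simp only [hp, dif_pos hb]; exact (hpart b hb).choose_spec.2.2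
  have hpp : ∀ b ∈ X, p (p b) = b := by
    intro b hb
    have h1 : s(p b, p (p b)) ∈ M := hpM _ (hpX b hb)
    have h2 : s(p b, b) ∈ M := by rw [Sym2.eq_swap]; exact hpM b hb
    exact huniq (p b) (hpX b hb) _ _ h1 h2
  -- finset version of X
  set Xf : Finset V := (Set.toFinite X).toFinset with hXf
  have hmem : ∀ v : V, v ∈ Xf ↔ v ∈ X := fun v => Set.Finite.mem_toFinset _
  have hcard : Xf.card = X.ncard := by rw [Set.ncard_eq_toFinset_card X]
  have hcardc : (Xfᶜ : Finset V).card = (Xᶜ : Set V).ncard := by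
    rw [Set.ncard_eq_toFinset_card (Xᶜ)]
    congr 1
    ext v
    simp [hmem]
  -- the weight function
  set g : V → V → ℕ := fun v b => (if Gi.Adj v b then 1 else 0) + (if Gj.Adj v b then 1 else 0)
    with hg
  have hg2 : ∀ v b : V, g v b ≤ 2 := by intro v b; simp only [hg]; split_ifs <;> omega
  have hpair : ∀ v : V, ∀ b ∈ X, g v b + g v (p b) ≤ 2 := by
    intro v b hb
    have hadj : Gk.Adj b (p b) := (SimpleGraph.mem_edgeSet Gk).mp (hME (hpM b hb))
    by_cases hvb : v = b
    · have : g v b = 0 := by subst hvb; simp [hg]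
      have := hg2 v (p b); omega
    by_cases hvc : v = p b
    · have : g v (p b) = 0 := by subst hvc; simp [hg]
      have := hg2 v b; omega
    have h1 := hforb b (p b) v hvb hvc hadj
    have h2 := hforb (p b) b v hvc hvb hadj.symm
    by_cases hib : Gi.Adj v b <;> by_cases hjb : Gj.Adj v b
    · have hic : ¬ Gi.Adj v (p b) := fun h => h2 ⟨h, hjb⟩
      have hjc : ¬ Gj.Adj v (p b) := fun h => h1 ⟨hib, h⟩
      simp [hg, hib, hjb, hic, hjc]
    · have hjc : ¬ Gj.Adj v (p b) := fun h => h1 ⟨hib, h⟩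
      simp only [hg, if_pos hib, if_neg hjb, if_neg hjc]
      split_ifs <;> omega
    · have hic : ¬ Gi.Adj v (p b) := fun h => h2 ⟨h, hjb⟩
      simp only [hg, if_neg hib, if_pos hjb, if_neg hic]
      split_ifs <;> omega
    · simp only [hg, if_neg hib, if_neg hjb]
      split_ifs <;> omega
  have hvert : ∀ v : V, (∑ b ∈ Xf, g v b) ≤ Xf.card := by
    intro v
    have hre : ∑ b ∈ Xf, g v (p b) = ∑ b ∈ Xf, g v b := by
      refine Finset.sum_nbij' p p ?_ ?_ ?_ ?_ ?_
      · intro a ha; exact (hmem _).mpr (hpX a ((hmem a).mp ha))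
      · intro a ha; exact (hmem _).mpr (hpX a ((hmem a).mp ha))
      · intro a ha; exact hpp a ((hmem a).mp ha)
      · intro a ha; exact hpp a ((hmem a).mp ha)
      · intro a ha; rfl
    have hb : ∑ b ∈ Xf, (g v b + g v (p b)) ≤ ∑ _b ∈ Xf, 2 :=
      Finset.sum_le_sum (fun b hb => hpair v b ((hmem b).mp hb))
    rw [Finset.sum_add_distrib, hre, Finset.sum_const, smul_eq_mul] at hb
    omega
  -- turning filter cards into sums
  have hfiltcard : ∀ (S T : Finset V) (G : SimpleGraph V),
      ((S ×ˢ T).filter (fun q : V × V => G.Adj q.1 q.2)).card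
        = ∑ a ∈ S, ∑ b ∈ T, (if G.Adj a b then 1 else 0) := by
    intro S T G
    rw [Finset.card_filter, Finset.sum_product]
  -- cross edges
  have hcrossle : ∀ G : SimpleGraph V,
      {e : Sym2 V | ∃ a b : V, a ∉ X ∧ b ∈ X ∧ G.Adj a b ∧ e = s(a, b)}.ncard
        ≤ ((Xfᶜ ×ˢ Xf).filter (fun q : V × V => G.Adj q.1 q.2)).card := by
    intro G
    rw [← Set.ncard_coe_finset]
    apply Set.ncard_le_ncard_of_injOn
      (f := fun e : Sym2 V =>
        if h : ∃ q : V × V, (q.1 ∉ X ∧ q.2 ∈ X ∧ G.Adj q.1 q.2) ∧ e = s(q.1, q.2)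
        then h.choose else e.out)
    · rintro e ⟨a, b, ha, hb, hadj, rfl⟩
      have hex : ∃ q : V × V, (q.1 ∉ X ∧ q.2 ∈ X ∧ G.Adj q.1 q.2) ∧ s(a, b) = s(q.1, q.2) :=
        ⟨(a, b), ⟨ha, hb, hadj⟩, rfl⟩
      simp only [dif_pos hex]
      obtain ⟨⟨h1, h2, h3⟩, -⟩ := hex.choose_spec
      have h1' : hex.choose.1 ∉ Xf := fun hc => h1 ((hmem _).mp hc)
      simp only [Finset.mem_coe, Finset.mem_filter, Finset.mem_product, Finset.mem_compl]
      exact ⟨⟨h1', (hmem _).mpr h2⟩, h3⟩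
    · rintro e ⟨a, b, ha, hb, hadj, rfl⟩ e' ⟨a', b', ha', hb', hadj', rfl⟩ heq
      have hex : ∃ q : V × V, (q.1 ∉ X ∧ q.2 ∈ X ∧ G.Adj q.1 q.2) ∧ s(a, b) = s(q.1, q.2) :=
        ⟨(a, b), ⟨ha, hb, hadj⟩, rfl⟩
      have hex' : ∃ q : V × V, (q.1 ∉ X ∧ q.2 ∈ X ∧ G.Adj q.1 q.2) ∧ s(a', b') = s(q.1, q.2) :=
        ⟨(a', b'), ⟨ha', hb', hadj'⟩, rfl⟩
      simp only [dif_pos hex, dif_pos hex'] at heq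
      rw [hex.choose_spec.2, hex'.choose_spec.2, heq]
  -- within edges
  have hwithin : ∀ G : SimpleGraph V,
      2 * {e : Sym2 V | ∃ a b : V, a ∈ X ∧ b ∈ X ∧ G.Adj a b ∧ e = s(a, b)}.ncard
        ≤ ((Xf ×ˢ Xf).filter (fun q : V × V => G.Adj q.1 q.2)).card := by
    intro G
    set Rw : Set (Sym2 V) := {e : Sym2 V | ∃ a b : V, a ∈ X ∧ b ∈ X ∧ G.Adj a b ∧ e = s(a, b)}
      with hRw
    set f : Sym2 V → V × V := fun e =>
      if h : ∃ q : V × V, (q.1 ∈ X ∧ q.2 ∈ X ∧ G.Adj q.1 q.2) ∧ e = s(q.1, q.2)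
      then h.choose else e.out with hf
    have hprop : ∀ e ∈ Rw,
        ((f e).1 ∈ X ∧ (f e).2 ∈ X ∧ G.Adj (f e).1 (f e).2) ∧ e = s((f e).1, (f e).2) := by
      rintro e ⟨a, b, ha, hb, hadj, rfl⟩
      have hex : ∃ q : V × V, (q.1 ∈ X ∧ q.2 ∈ X ∧ G.Adj q.1 q.2) ∧ s(a, b) = s(q.1, q.2) :=
        ⟨(a, b), ⟨ha, hb, hadj⟩, rfl⟩
      simp only [hf, dif_pos hex]
      exact hex.choose_spec
    set f2 : Sym2 V → V × V := fun e => ((f e).2, (f e).1) with hf2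
    have hinj1 : Set.InjOn f Rw := by
      intro e he e' he' heq
      rw [(hprop e he).2, (hprop e' he').2, heq]
    have hinj2 : Set.InjOn f2 Rw := by
      intro e he e' he' heq
      have h1 : (f e).2 = (f e').2 := congrArg Prod.fst heq
      have h2 : (f e).1 = (f e').1 := congrArg Prod.snd heq
      rw [(hprop e he).2, (hprop e' he').2, h1, h2]
    have hsub1 : f '' Rw ⊆ ↑((Xf ×ˢ Xf).filter (fun q : V × V => G.Adj q.1 q.2)) := by
      rintro q ⟨e, he, rfl⟩
      obtain ⟨⟨h1, h2, h3⟩, -⟩ := hprop e he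
      simp only [Finset.mem_coe, Finset.mem_filter, Finset.mem_product]
      exact ⟨⟨(hmem _).mpr h1, (hmem _).mpr h2⟩, h3⟩
    have hsub2 : f2 '' Rw ⊆ ↑((Xf ×ˢ Xf).filter (fun q : V × V => G.Adj q.1 q.2)) := by
      rintro q ⟨e, he, rfl⟩
      obtain ⟨⟨h1, h2, h3⟩, -⟩ := hprop e he
      simp only [hf2, Finset.mem_coe, Finset.mem_filter, Finset.mem_product]
      exact ⟨⟨(hmem _).mpr h2, (hmem _).mpr h1⟩, h3.symm⟩
    have hdisj : Disjoint (f '' Rw) (f2 '' Rw) := by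
      rw [Set.disjoint_left]
      rintro q ⟨e, he, rfl⟩ ⟨e', he', hq⟩
      have h1 : (f e').2 = (f e).1 := congrArg Prod.fst hq
      have h2 : (f e').1 = (f e).2 := congrArg Prod.snd hq
      have hee : e' = e := by
        rw [(hprop e he).2, (hprop e' he').2, h1, h2, Sym2.eq_swap]
      subst hee
      have hne := ((hprop e' he').1.2.2).ne
      exact hne h2
    have hcalc : 2 * Rw.ncard = ((f '' Rw) ∪ (f2 '' Rw)).ncard := by
      rw [Set.ncard_union_eq hdisj (Set.toFinite _) (Set.toFinite _),
        Set.ncard_image_of_injOn hinj1, Set.ncard_image_of_injOn hinj2, two_mul]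
    rw [hcalc, ← Set.ncard_coe_finset]
    exact Set.ncard_le_ncard (Set.union_subset hsub1 hsub2) (Set.toFinite _)
  -- each removed edge is within or cross
  have hsplitle : ∀ G : SimpleGraph V, {e ∈ G.edgeSet | ∃ v ∈ e, v ∈ X}.ncard ≤
      {e : Sym2 V | ∃ a b : V, a ∈ X ∧ b ∈ X ∧ G.Adj a b ∧ e = s(a, b)}.ncard
      + {e : Sym2 V | ∃ a b : V, a ∉ X ∧ b ∈ X ∧ G.Adj a b ∧ e = s(a, b)}.ncard := by
    intro G
    refine le_trans (Set.ncard_le_ncard ?_ (Set.toFinite _)) (Set.ncard_union_le _ _)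
    rintro e ⟨he, v, hve, hvX⟩
    have hspec := Sym2.other_spec hve
    have hadj : G.Adj v (Sym2.Mem.other hve) := by
      rw [← SimpleGraph.mem_edgeSet, hspec]; exact he
    by_cases hw : Sym2.Mem.other hve ∈ X
    · exact Or.inl ⟨v, _, hvX, hw, hadj, hspec.symm⟩
    · refine Or.inr ⟨_, v, hw, hvX, hadj.symm, ?_⟩
      rw [Sym2.eq_swap, hspec]
  -- sum bounds
  have hwsum : ((Xf ×ˢ Xf).filter (fun q : V × V => Gi.Adj q.1 q.2)).card
      + ((Xf ×ˢ Xf).filter (fun q : V × V => Gj.Adj q.1 q.2)).card ≤ Xf.card * Xf.card := by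
    rw [hfiltcard, hfiltcard, ← Finset.sum_add_distrib]
    calc ∑ a ∈ Xf, (∑ b ∈ Xf, (if Gi.Adj a b then 1 else 0)
          + ∑ b ∈ Xf, (if Gj.Adj a b then 1 else 0))
        ≤ ∑ _a ∈ Xf, Xf.card := by
          refine Finset.sum_le_sum fun a _ => ?_
          rw [← Finset.sum_add_distrib]
          exact hvert a
      _ = Xf.card * Xf.card := by rw [Finset.sum_const, smul_eq_mul]
  have hcsum : ((Xfᶜ ×ˢ Xf).filter (fun q : V × V => Gi.Adj q.1 q.2)).card
      + ((Xfᶜ ×ˢ Xf).filter (fun q : V × V => Gj.Adj q.1 q.2)).card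
      ≤ (Xfᶜ : Finset V).card * Xf.card := by
    rw [hfiltcard, hfiltcard, ← Finset.sum_add_distrib]
    calc ∑ a ∈ Xfᶜ, (∑ b ∈ Xf, (if Gi.Adj a b then 1 else 0)
          + ∑ b ∈ Xf, (if Gj.Adj a b then 1 else 0))
        ≤ ∑ _a ∈ Xfᶜ, Xf.card := by
          refine Finset.sum_le_sum fun a _ => ?_
          rw [← Finset.sum_add_distrib]
          exact hvert a
      _ = (Xfᶜ : Finset V).card * Xf.card := by rw [Finset.sum_const, smul_eq_mul]
  -- assembly
  have si := hsplitle Gi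
  have sj := hsplitle Gj
  have wi := hwithin Gi
  have wj := hwithin Gj
  have ci := hcrossle Gi
  have cj := hcrossle Gj
  rw [← hcard, ← hcardc]
  omega

open Classical in
lemma ncard_edge_split {V : Type*} [Fintype V] (G : SimpleGraph V) (X : Set V) :
    G.edgeSet.ncard ≤ (G.induce Xᶜ).edgeSet.ncard
      + {e ∈ G.edgeSet | ∃ v ∈ e, v ∈ X}.ncard := by
  have hK : {e ∈ G.edgeSet | ∀ v ∈ e, v ∉ X}
      = Sym2.map (Subtype.val : (Xᶜ : Set V) → V) '' (G.induce Xᶜ).edgeSet := by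
    ext e
    constructor
    · rintro ⟨he, hall⟩
      induction e with
      | _ a b =>
        refine ⟨s(⟨a, hall a (by simp)⟩, ⟨b, hall b (by simp)⟩), ?_, by simp⟩
        simpa using he
    · rintro ⟨e', he', rfl⟩
      induction e' with
      | _ a b =>
        refine ⟨by simpa using he', ?_⟩
        intro v hv
        simp only [Sym2.map_pair_eq, Sym2.mem_iff] at hv
        rcases hv with rfl | rfl
        · exact a.2
        · exact b.2
  have hsub : G.edgeSet ⊆ {e ∈ G.edgeSet | ∀ v ∈ e, v ∉ X} ∪ {e ∈ G.edgeSet | ∃ v ∈ e, v ∈ X} := by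
    intro e he
    by_cases h : ∃ v ∈ e, v ∈ X
    · exact Or.inr ⟨he, h⟩
    · push_neg at h
      exact Or.inl ⟨he, h⟩
  calc G.edgeSet.ncard
      ≤ ({e ∈ G.edgeSet | ∀ v ∈ e, v ∉ X} ∪ {e ∈ G.edgeSet | ∃ v ∈ e, v ∈ X}).ncard :=
        Set.ncard_le_ncard hsub (Set.toFinite _)
    _ ≤ {e ∈ G.edgeSet | ∀ v ∈ e, v ∉ X}.ncard + {e ∈ G.edgeSet | ∃ v ∈ e, v ∈ X}.ncard :=
        Set.ncard_union_le _ _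
    _ ≤ _ := by
        rw [hK, Set.ncard_image_of_injective _ (Sym2.map.injective Subtype.val_injective)]

lemma rainbow_arith (t n l a1 a2 E1 E2 r1 r2 : ℝ) (ht : 0 ≤ t) (hl : 0 ≤ l) (hln : l ≤ n)
    (h1 : E1 ≤ a1 + r1) (h2 : E2 ≤ a2 + r2)
    (hr : 2 * (r1 + r2) ≤ l * l + 2 * ((n - l) * l))
    (hE : E1 + E2 ≥ (1 + t) / 2 * n ^ 2 + 3 / 2 * n) :
    a1 + a2 ≥ (1 + t) / 2 * (n - l) ^ 2 + 3 / 2 * (n - l) := by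
  nlinarith [mul_nonneg ht (mul_nonneg hl (by linarith : (0:ℝ) ≤ 2 * n - l))]

theorem deleting_triply_matched_set_gives_smaller_counterexample {V : Type*} [Fintype V]
    (G₁ G₂ G₃ : SimpleGraph V) (n ℓ : ℕ) (hn : Fintype.card V = n)
    (hNR : ¬ HasRainbowTriangle G₁ G₂ G₃)
    (h₁₂ : (G₁.edgeSet.ncard : ℝ) + (G₂.edgeSet.ncard : ℝ) ≥
      (1 + tau ^ 2) / 2 * (n : ℝ) ^ 2 + 3 / 2 * (n : ℝ))
    (h₁₃ : (G₁.edgeSet.ncard : ℝ) + (G₃.edgeSet.ncard : ℝ) ≥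
      (1 + tau ^ 2) / 2 * (n : ℝ) ^ 2 + 3 / 2 * (n : ℝ))
    (h₂₃ : (G₂.edgeSet.ncard : ℝ) + (G₃.edgeSet.ncard : ℝ) ≥
      (1 + tau ^ 2) / 2 * (n : ℝ) ^ 2 + 3 / 2 * (n : ℝ))
    (X : Set V) (hne : X.Nonempty) (hprop : X ≠ Set.univ) (hℓ : X.ncard = ℓ)
    (hPM₁ : HasPerfectMatchingOn G₁ X) (hPM₂ : HasPerfectMatchingOn G₂ X)
    (hPM₃ : HasPerfectMatchingOn G₃ X) :
    ¬ HasRainbowTriangle (G₁.induce Xᶜ) (G₂.induce Xᶜ) (G₃.induce Xᶜ) ∧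
    ((G₁.induce Xᶜ).edgeSet.ncard : ℝ) + ((G₂.induce Xᶜ).edgeSet.ncard : ℝ) ≥
      (1 + tau ^ 2) / 2 * ((n : ℝ) - (ℓ : ℝ)) ^ 2 + 3 / 2 * ((n : ℝ) - (ℓ : ℝ)) ∧
    ((G₁.induce Xᶜ).edgeSet.ncard : ℝ) + ((G₃.induce Xᶜ).edgeSet.ncard : ℝ) ≥
      (1 + tau ^ 2) / 2 * ((n : ℝ) - (ℓ : ℝ)) ^ 2 + 3 / 2 * ((n : ℝ) - (ℓ : ℝ)) ∧
    ((G₂.induce Xᶜ).edgeSet.ncard : ℝ) + ((G₃.induce Xᶜ).edgeSet.ncard : ℝ) ≥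
      (1 + tau ^ 2) / 2 * ((n : ℝ) - (ℓ : ℝ)) ^ 2 + 3 / 2 * ((n : ℝ) - (ℓ : ℝ)) := by
  have hℓn : ℓ ≤ n := by
    have h := Set.ncard_le_ncard (Set.subset_univ X) (Set.toFinite _)
    rwa [Set.ncard_univ, Nat.card_eq_fintype_card, hn, hℓ] at h
  have hcompl : (Xᶜ : Set V).ncard = n - ℓ := by
    have h := Set.ncard_add_ncard_compl X
    rw [hℓ, Nat.card_eq_fintype_card, hn] at h
    omega
  have hNR' : ¬ HasRainbowTriangle (G₁.induce Xᶜ) (G₂.induce Xᶜ) (G₃.induce Xᶜ) := by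
    rintro ⟨v₁, v₂, v₃, h12, h23, h31, a1, a2, a3⟩
    exact hNR ⟨v₁, v₂, v₃, Subtype.coe_ne_coe.mpr h12, Subtype.coe_ne_coe.mpr h23,
      Subtype.coe_ne_coe.mpr h31, a1, a2, a3⟩
  have hforb12 : ∀ x y v : V, v ≠ x → v ≠ y → G₃.Adj x y → ¬(G₁.Adj v x ∧ G₂.Adj v y) := by
    rintro x y v hvx hvy hxy ⟨h1, h2⟩
    exact hNR ⟨x, v, y, Ne.symm hvx, hvy, hxy.ne', h1.symm, h2, hxy.symm⟩
  have hforb13 : ∀ x y v : V, v ≠ x → v ≠ y → G₂.Adj x y → ¬(G₁.Adj v x ∧ G₃.Adj v y) := by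
    rintro x y v hvx hvy hxy ⟨h1, h2⟩
    exact hNR ⟨v, x, y, hvx, hxy.ne, Ne.symm hvy, h1, hxy, h2.symm⟩
  have hforb23 : ∀ x y v : V, v ≠ x → v ≠ y → G₁.Adj x y → ¬(G₂.Adj v x ∧ G₃.Adj v y) := by
    rintro x y v hvx hvy hxy ⟨h1, h2⟩
    exact hNR ⟨y, x, v, hxy.ne', Ne.symm hvx, hvy, hxy.symm, h1.symm, h2⟩
  have P12 := pair_removed_bound G₁ G₂ G₃ X hforb12 hPM₃
  have P13 := pair_removed_bound G₁ G₃ G₂ X hforb13 hPM₂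
  have P23 := pair_removed_bound G₂ G₃ G₁ X hforb23 hPM₁
  rw [hℓ, hcompl] at P12 P13 P23
  have S1 := ncard_edge_split G₁ X
  have S2 := ncard_edge_split G₂ X
  have S3 := ncard_edge_split G₃ X
  have ht : (0:ℝ) ≤ tau ^ 2 := sq_nonneg _
  have hl0 : (0:ℝ) ≤ (ℓ : ℝ) := Nat.cast_nonneg _
  have hln' : (ℓ : ℝ) ≤ (n : ℝ) := Nat.cast_le.mpr hℓn
  have cast1 : ((G₁.edgeSet.ncard : ℝ)) ≤ ((G₁.induce Xᶜ).edgeSet.ncard : ℝ)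
      + ({e ∈ G₁.edgeSet | ∃ v ∈ e, v ∈ X}.ncard : ℝ) := by exact_mod_cast S1
  have cast2 : ((G₂.edgeSet.ncard : ℝ)) ≤ ((G₂.induce Xᶜ).edgeSet.ncard : ℝ)
      + ({e ∈ G₂.edgeSet | ∃ v ∈ e, v ∈ X}.ncard : ℝ) := by exact_mod_cast S2
  have cast3 : ((G₃.edgeSet.ncard : ℝ)) ≤ ((G₃.induce Xᶜ).edgeSet.ncard : ℝ)
      + ({e ∈ G₃.edgeSet | ∃ v ∈ e, v ∈ X}.ncard : ℝ) := by exact_mod_cast S3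
  have castP : ∀ r1 r2 : ℕ, 2 * (r1 + r2) ≤ ℓ * ℓ + 2 * ((n - ℓ) * ℓ) →
      2 * ((r1 : ℝ) + (r2 : ℝ)) ≤ (ℓ : ℝ) * ℓ + 2 * (((n : ℝ) - ℓ) * ℓ) := by
    intro r1 r2 h
    have := (Nat.cast_le (α := ℝ)).mpr h
    push_cast [Nat.cast_sub hℓn] at this
    push_cast
    linarith
  refine ⟨hNR', ?_, ?_, ?_⟩
  · exact rainbow_arith _ _ _ _ _ _ _ _ _ ht hl0 hln' cast1 cast2 (castP _ _ P12) h₁₂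
  · exact rainbow_arith _ _ _ _ _ _ _ _ _ ht hl0 hln' cast1 cast3 (castP _ _ P13) h₁₃
  · exact rainbow_arith _ _ _ _ _ _ _ _ _ ht hl0 hln' cast2 cast3 (castP _ _ P23) h₂₃
end

section
/- Let G₁, G₂, G₃ be simple graphs on a common set V such that there is no rainbow triangle and there is no nonempty set S ⊆ V for which every Gᵢ[S] (1 ≤ i ≤ 3) has a perfect matching. Let {i, j, k} = {1, 2, 3} and let X, X′ ⊆ V be disjoint 2-element sets with e_i(X) = e_j(X) = e_i(X′) = e_j(X′) = 1 and e_k(X) = e_k(X′) = 0. Then one of the following holds: (a) e_k(X, X′) = 0; or (b) e_k(X, X′) = 1 and both e_i(X, X′) ≤ 2 and e_j(X, X′) ≤ 2; or (c) e_k(X, X′) = 2 and e_i(X, X′) = e_j(X, X′) = 0. -/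
section Aux

variable {V : Type*}

private lemma within_pair_set (G : SimpleGraph V) (a b : V) :
    {e ∈ G.edgeSet | ∀ v ∈ e, v ∈ ({a, b} : Set V)} = G.edgeSet ∩ {s(a, b)} := by
  ext e
  induction e using Sym2.ind with
  | _ u v =>
    simp only [Set.mem_setOf_eq, Set.mem_inter_iff, Set.mem_singleton_iff]
    constructor
    · rintro ⟨he, hv⟩
      have huv : u ≠ v := (G.mem_edgeSet.mp he).ne
      have hu' : u ∈ ({a, b} : Set V) := hv u (by simp)
      have hv' : v ∈ ({a, b} : Set V) := hv v (by simp)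
      simp only [Set.mem_insert_iff, Set.mem_singleton_iff] at hu' hv'
      refine ⟨he, ?_⟩
      rw [Sym2.eq_iff]
      rcases hu' with rfl | rfl <;> rcases hv' with h | h <;> tauto
    · rintro ⟨he, heq⟩
      refine ⟨he, ?_⟩
      rw [heq]
      intro x hx
      rcases Sym2.mem_iff.mp hx with rfl | rfl <;> simp

private lemma adj_of_edgesWithin_one (G : SimpleGraph V) {a b : V}
    (h : edgesWithin G {a, b} = 1) : G.Adj a b := by
  by_contra hadj
  unfold edgesWithin at h
  rw [within_pair_set] at h
  have hs : G.edgeSet ∩ {s(a, b)} = ∅ := by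
    apply Set.eq_empty_iff_forall_notMem.mpr
    rintro e ⟨he, heq⟩
    rw [Set.mem_singleton_iff] at heq
    subst heq
    exact hadj he
  rw [hs] at h
  simp at h

private lemma ncard_le_two_of_subset_pair {α : Type*} {s : Set α} {p q : α}
    (h : s ⊆ {p, q}) : s.ncard ≤ 2 := by
  calc s.ncard ≤ ({p, q} : Set α).ncard :=
        Set.ncard_le_ncard h (Set.Finite.insert _ (Set.finite_singleton _))
    _ ≤ 2 := le_trans (Set.ncard_insert_le p {q}) (by simp)

private lemma fin3_cover {i j k : Fin 3} (hij : i ≠ j) (hjk : j ≠ k) (hik : i ≠ k)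
    (m : Fin 3) : m = i ∨ m = j ∨ m = k := by
  fin_cases i <;> fin_cases j <;> fin_cases k <;> fin_cases m <;> simp_all

private lemma noRT' (G : Fin 3 → SimpleGraph V)
    (hNR : ¬ HasRainbowTriangle (G 0) (G 1) (G 2))
    (i j k : Fin 3) (hij : i ≠ j) (hjk : j ≠ k) (hik : i ≠ k)
    (x y z : V) (hxy : x ≠ y) (hyz : y ≠ z) (hzx : z ≠ x)
    (h1 : (G i).Adj x y) (h2 : (G j).Adj y z) (h3 : (G k).Adj z x) : False := by
  fin_cases i <;> fin_cases j <;> fin_cases k <;>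
    first
    | exact absurd rfl hij
    | exact absurd rfl hjk
    | exact absurd rfl hik
    | exact hNR ⟨x, y, z, hxy, hyz, hzx, h1, h2, h3⟩
    | exact hNR ⟨y, x, z, hxy.symm, hzx.symm, hyz.symm, h1.symm, h3.symm, h2.symm⟩
    | exact hNR ⟨z, y, x, hyz.symm, hxy.symm, hzx.symm, h2.symm, h1.symm, h3.symm⟩
    | exact hNR ⟨z, x, y, hzx, hxy, hyz, h3, h1, h2⟩
    | exact hNR ⟨y, z, x, hyz, hzx, hxy, h2, h3, h1⟩
    | exact hNR ⟨x, z, y, hzx.symm, hyz.symm, hxy.symm, h3.symm, h2.symm, h1.symm⟩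

private lemma pm_two (G : SimpleGraph V) {x y z w : V} (hxy : G.Adj x y) (hzw : G.Adj z w)
    (hxz : x ≠ z) (hxw : x ≠ w) (hyz : y ≠ z) (hyw : y ≠ w) :
    HasPerfectMatchingOn G {x, y, z, w} := by
  refine ⟨{s(x, y), s(z, w)}, ?_, ?_, ?_⟩
  · intro e he
    simp only [Set.mem_insert_iff, Set.mem_singleton_iff] at he
    rcases he with rfl | rfl
    · exact hxy
    · exact hzw
  · intro e he v hv
    simp only [Set.mem_insert_iff, Set.mem_singleton_iff] at he
    rcases he with rfl | rfl <;> rcases Sym2.mem_iff.mp hv with rfl | rfl <;> simp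
  · intro u hu
    simp only [Set.mem_insert_iff, Set.mem_singleton_iff] at hu
    rcases hu with h | h | h | h
    · refine ⟨s(x, y), ⟨Or.inl rfl, by simp [h]⟩, ?_⟩
      rintro e ⟨hm, hv⟩
      simp only [Set.mem_insert_iff, Set.mem_singleton_iff] at hm
      rcases hm with rfl | rfl
      · rfl
      · rcases Sym2.mem_iff.mp hv with h2 | h2
        · exact absurd (h.symm.trans h2) hxz
        · exact absurd (h.symm.trans h2) hxw
    · refine ⟨s(x, y), ⟨Or.inl rfl, by simp [h]⟩, ?_⟩
      rintro e ⟨hm, hv⟩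
      simp only [Set.mem_insert_iff, Set.mem_singleton_iff] at hm
      rcases hm with rfl | rfl
      · rfl
      · rcases Sym2.mem_iff.mp hv with h2 | h2
        · exact absurd (h.symm.trans h2) hyz
        · exact absurd (h.symm.trans h2) hyw
    · refine ⟨s(z, w), ⟨Or.inr rfl, by simp [h]⟩, ?_⟩
      rintro e ⟨hm, hv⟩
      simp only [Set.mem_insert_iff, Set.mem_singleton_iff] at hm
      rcases hm with rfl | rfl
      · rcases Sym2.mem_iff.mp hv with h2 | h2
        · exact absurd (h2.symm.trans h) hxz
        · exact absurd (h2.symm.trans h) hyz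
      · rfl
    · refine ⟨s(z, w), ⟨Or.inr rfl, by simp [h]⟩, ?_⟩
      rintro e ⟨hm, hv⟩
      simp only [Set.mem_insert_iff, Set.mem_singleton_iff] at hm
      rcases hm with rfl | rfl
      · rcases Sym2.mem_iff.mp hv with h2 | h2
        · exact absurd (h2.symm.trans h) hxw
        · exact absurd (h2.symm.trans h) hyw
      · rfl

private lemma edgesBetween_pair (G : SimpleGraph V) (a b c d : V) :
    edgesBetween G {a, b} {c, d} =
      (G.edgeSet ∩ {s(a, c), s(a, d), s(b, c), s(b, d)}).ncard := by
  unfold edgesBetween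
  congr 1
  ext e
  simp only [Set.mem_setOf_eq, Set.mem_inter_iff, Set.mem_insert_iff, Set.mem_singleton_iff]
  constructor
  · rintro ⟨he, x, hx, y, hy, rfl⟩
    rcases hx with rfl | rfl <;> rcases hy with rfl | rfl <;> tauto
  · rintro ⟨he, rfl | rfl | rfl | rfl⟩
    · exact ⟨he, a, Or.inl rfl, c, Or.inl rfl, rfl⟩
    · exact ⟨he, a, Or.inl rfl, d, Or.inr rfl, rfl⟩
    · exact ⟨he, b, Or.inr rfl, c, Or.inl rfl, rfl⟩
    · exact ⟨he, b, Or.inr rfl, d, Or.inr rfl, rfl⟩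

private lemma inter4_ncard_zero (G : SimpleGraph V) {a b c d : V}
    (h1 : ¬G.Adj a c) (h2 : ¬G.Adj a d) (h3 : ¬G.Adj b c) (h4 : ¬G.Adj b d) :
    (G.edgeSet ∩ {s(a, c), s(a, d), s(b, c), s(b, d)}).ncard = 0 := by
  have hE : G.edgeSet ∩ {s(a, c), s(a, d), s(b, c), s(b, d)} = ∅ := by
    ext e
    simp only [Set.mem_inter_iff, Set.mem_insert_iff, Set.mem_singleton_iff,
      Set.mem_empty_iff_false, iff_false, not_and]
    rintro he (rfl | rfl | rfl | rfl)
    · exact h1 (G.mem_edgeSet.mp he)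
    · exact h2 (G.mem_edgeSet.mp he)
    · exact h3 (G.mem_edgeSet.mp he)
    · exact h4 (G.mem_edgeSet.mp he)
  rw [hE, Set.ncard_empty]

end Aux

theorem digon_pair_structure_same_colours {V : Type*} [Fintype V]
    (G : Fin 3 → SimpleGraph V)
    (hNR : ¬ HasRainbowTriangle (G 0) (G 1) (G 2))
    (hPM : ¬ ∃ S : Set V, S.Nonempty ∧ ∀ m : Fin 3, HasPerfectMatchingOn (G m) S)
    (i j k : Fin 3) (hij : i ≠ j) (hjk : j ≠ k) (hik : i ≠ k)
    (X X' : Set V) (hX : X.ncard = 2) (hX' : X'.ncard = 2) (hdisj : Disjoint X X')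
    (hiX : edgesWithin (G i) X = 1) (hjX : edgesWithin (G j) X = 1)
    (hkX : edgesWithin (G k) X = 0)
    (hiX' : edgesWithin (G i) X' = 1) (hjX' : edgesWithin (G j) X' = 1)
    (hkX' : edgesWithin (G k) X' = 0) :
    edgesBetween (G k) X X' = 0 ∨
    (edgesBetween (G k) X X' = 1 ∧
      edgesBetween (G i) X X' ≤ 2 ∧ edgesBetween (G j) X X' ≤ 2) ∨
    (edgesBetween (G k) X X' = 2 ∧
      edgesBetween (G i) X X' = 0 ∧ edgesBetween (G j) X X' = 0) := by
  classical
  obtain ⟨a, b, hab, rfl⟩ := Set.ncard_eq_two.mp hX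
  obtain ⟨c, d, hcd, rfl⟩ := Set.ncard_eq_two.mp hX'
  have hnotin : ∀ x ∈ ({a, b} : Set V), x ∉ ({c, d} : Set V) :=
    fun x hx => Set.disjoint_left.mp hdisj hx
  have hac : a ≠ c := fun h => hnotin a (by simp) (by simp [h])
  have had : a ≠ d := fun h => hnotin a (by simp) (by simp [h])
  have hbc : b ≠ c := fun h => hnotin b (by simp) (by simp [h])
  have hbd : b ≠ d := fun h => hnotin b (by simp) (by simp [h])
  have iab := adj_of_edgesWithin_one _ hiX
  have jab := adj_of_edgesWithin_one _ hjX
  have icd := adj_of_edgesWithin_one _ hiX'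
  have jcd := adj_of_edgesWithin_one _ hjX'
  have nr : ∀ x y z : V, x ≠ y → y ≠ z → z ≠ x →
      (G i).Adj x y → (G j).Adj y z → (G k).Adj z x → False :=
    fun x y z => noRT' G hNR i j k hij hjk hik x y z
  have nrj : ∀ x y z : V, x ≠ y → y ≠ z → z ≠ x →
      (G j).Adj x y → (G i).Adj y z → (G k).Adj z x → False :=
    fun x y z => noRT' G hNR j i k hij.symm hik hjk x y z
  have pm1 : ¬((G k).Adj a c ∧ (G k).Adj b d) := by
    rintro ⟨k1, k2⟩
    apply hPM
    refine ⟨{a, b, c, d}, ⟨a, by simp⟩, ?_⟩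
    intro m
    rcases fin3_cover hij hjk hik m with rfl | rfl | rfl
    · exact pm_two _ iab icd hac had hbc hbd
    · exact pm_two _ jab jcd hac had hbc hbd
    · have hset : ({a, b, c, d} : Set V) = {a, c, b, d} := by ext x; simp; tauto
      rw [hset]
      exact pm_two _ k1 k2 hab had hbc.symm hcd
  have pm2 : ¬((G k).Adj a d ∧ (G k).Adj b c) := by
    rintro ⟨k1, k2⟩
    apply hPM
    refine ⟨{a, b, c, d}, ⟨a, by simp⟩, ?_⟩
    intro m
    rcases fin3_cover hij hjk hik m with rfl | rfl | rfl
    · exact pm_two _ iab icd hac had hbc hbd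
    · exact pm_two _ jab jcd hac had hbc hbd
    · have hset : ({a, b, c, d} : Set V) = {a, d, b, c} := by ext x; simp; tauto
      rw [hset]
      exact pm_two _ k1 k2 hab hac hbd.symm hcd.symm
  have hne1 : s(a, c) ≠ s(a, d) := by
    rw [Ne, Sym2.eq_iff]
    rintro (⟨-, h'⟩ | ⟨h1', h2'⟩)
    · exact hcd h'
    · exact hcd (h2'.trans h1')
  have hne2 : s(a, c) ≠ s(b, c) := by
    rw [Ne, Sym2.eq_iff]
    rintro (⟨h', -⟩ | ⟨h1', h2'⟩)
    · exact hab h'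
    · exact hac h1'
  have hne3 : s(a, d) ≠ s(b, d) := by
    rw [Ne, Sym2.eq_iff]
    rintro (⟨h', -⟩ | ⟨h1', h2'⟩)
    · exact hab h'
    · exact had h1'
  have hne4 : s(b, c) ≠ s(b, d) := by
    rw [Ne, Sym2.eq_iff]
    rintro (⟨-, h'⟩ | ⟨h1', h2'⟩)
    · exact hcd h'
    · exact hbd h1'
  simp only [edgesBetween_pair]
  by_cases h1 : (G k).Adj a c <;> by_cases h2 : (G k).Adj a d <;>
    by_cases h3 : (G k).Adj b c <;> by_cases h4 : (G k).Adj b d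
  · exact absurd ⟨h1, h4⟩ pm1
  · exact absurd ⟨h2, h3⟩ pm2
  · exact absurd ⟨h1, h4⟩ pm1
  · refine Or.inr (Or.inr ⟨?_, ?_, ?_⟩)
    · have hk : (G k).edgeSet ∩ {s(a, c), s(a, d), s(b, c), s(b, d)} = {s(a, c), s(a, d)} := by
        ext e
        simp only [Set.mem_inter_iff, Set.mem_insert_iff, Set.mem_singleton_iff]
        constructor
        · rintro ⟨he, rfl | rfl | rfl | rfl⟩
          · exact Or.inl rfl
          · exact Or.inr rfl
          · exact absurd ((G k).mem_edgeSet.mp he) h3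
          · exact absurd ((G k).mem_edgeSet.mp he) h4
        · rintro (rfl | rfl)
          · exact ⟨(G k).mem_edgeSet.mpr h1, Or.inl rfl⟩
          · exact ⟨(G k).mem_edgeSet.mpr h2, Or.inr (Or.inl rfl)⟩
      rw [hk, Set.ncard_pair hne1]
    · refine inter4_ncard_zero _ ?_ ?_ ?_ ?_
      · exact fun h => nr a c d hac hcd had.symm h jcd h2.symm
      · exact fun h => nr a d c had hcd.symm hac.symm h jcd.symm h1.symm
      · exact fun h => nr c b a hbc.symm hab.symm hac h.symm jab.symm h1
      · exact fun h => nr d b a hbd.symm hab.symm had h.symm jab.symm h2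
    · refine inter4_ncard_zero _ ?_ ?_ ?_ ?_
      · exact fun h => nrj a c d hac hcd had.symm h icd h2.symm
      · exact fun h => nrj a d c had hcd.symm hac.symm h icd.symm h1.symm
      · exact fun h => nrj c b a hbc.symm hab.symm hac h.symm iab.symm h1
      · exact fun h => nrj d b a hbd.symm hab.symm had h.symm iab.symm h2
  · exact absurd ⟨h1, h4⟩ pm1
  · refine Or.inr (Or.inr ⟨?_, ?_, ?_⟩)
    · have hk : (G k).edgeSet ∩ {s(a, c), s(a, d), s(b, c), s(b, d)} = {s(a, c), s(b, c)} := by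
        ext e
        simp only [Set.mem_inter_iff, Set.mem_insert_iff, Set.mem_singleton_iff]
        constructor
        · rintro ⟨he, rfl | rfl | rfl | rfl⟩
          · exact Or.inl rfl
          · exact absurd ((G k).mem_edgeSet.mp he) h2
          · exact Or.inr rfl
          · exact absurd ((G k).mem_edgeSet.mp he) h4
        · rintro (rfl | rfl)
          · exact ⟨(G k).mem_edgeSet.mpr h1, Or.inl rfl⟩
          · exact ⟨(G k).mem_edgeSet.mpr h3, Or.inr (Or.inr (Or.inl rfl))⟩
      rw [hk, Set.ncard_pair hne2]
    · refine inter4_ncard_zero _ ?_ ?_ ?_ ?_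
      · exact fun h => nr c a b hac.symm hab hbc h.symm jab h3
      · exact fun h => nr a d c had hcd.symm hac.symm h jcd.symm h1.symm
      · exact fun h => nr c b a hbc.symm hab.symm hac h.symm jab.symm h1
      · exact fun h => nr b d c hbd hcd.symm hbc.symm h jcd.symm h3.symm
    · refine inter4_ncard_zero _ ?_ ?_ ?_ ?_
      · exact fun h => nrj c a b hac.symm hab hbc h.symm iab h3
      · exact fun h => nrj a d c had hcd.symm hac.symm h icd.symm h1.symm
      · exact fun h => nrj c b a hbc.symm hab.symm hac h.symm iab.symm h1
      · exact fun h => nrj b d c hbd hcd.symm hbc.symm h icd.symm h3.symm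
  · exact absurd ⟨h1, h4⟩ pm1
  · refine Or.inr (Or.inl ⟨?_, ?_, ?_⟩)
    · have hk : (G k).edgeSet ∩ {s(a, c), s(a, d), s(b, c), s(b, d)} = {s(a, c)} := by
        ext e
        simp only [Set.mem_inter_iff, Set.mem_insert_iff, Set.mem_singleton_iff]
        constructor
        · rintro ⟨he, rfl | rfl | rfl | rfl⟩
          · rfl
          · exact absurd ((G k).mem_edgeSet.mp he) h2
          · exact absurd ((G k).mem_edgeSet.mp he) h3
          · exact absurd ((G k).mem_edgeSet.mp he) h4
        · rintro rfl
          exact ⟨(G k).mem_edgeSet.mpr h1, Or.inl rfl⟩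
      rw [hk, Set.ncard_singleton]
    · apply ncard_le_two_of_subset_pair (p := s(a, c)) (q := s(b, d))
      intro e he
      simp only [Set.mem_inter_iff, Set.mem_insert_iff, Set.mem_singleton_iff] at he ⊢
      obtain ⟨hee, rfl | rfl | rfl | rfl⟩ := he
      · exact Or.inl rfl
      · exact absurd ((G i).mem_edgeSet.mp hee) (fun h => nr a d c had hcd.symm hac.symm h jcd.symm h1.symm)
      · exact absurd ((G i).mem_edgeSet.mp hee) (fun h => nr c b a hbc.symm hab.symm hac h.symm jab.symm h1)
      · exact Or.inr rfl
    · apply ncard_le_two_of_subset_pair (p := s(a, c)) (q := s(b, d))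
      intro e he
      simp only [Set.mem_inter_iff, Set.mem_insert_iff, Set.mem_singleton_iff] at he ⊢
      obtain ⟨hee, rfl | rfl | rfl | rfl⟩ := he
      · exact Or.inl rfl
      · exact absurd ((G j).mem_edgeSet.mp hee) (fun h => nrj a d c had hcd.symm hac.symm h icd.symm h1.symm)
      · exact absurd ((G j).mem_edgeSet.mp hee) (fun h => nrj c b a hbc.symm hab.symm hac h.symm iab.symm h1)
      · exact Or.inr rfl
  · exact absurd ⟨h2, h3⟩ pm2
  · exact absurd ⟨h2, h3⟩ pm2
  · refine Or.inr (Or.inr ⟨?_, ?_, ?_⟩)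
    · have hk : (G k).edgeSet ∩ {s(a, c), s(a, d), s(b, c), s(b, d)} = {s(a, d), s(b, d)} := by
        ext e
        simp only [Set.mem_inter_iff, Set.mem_insert_iff, Set.mem_singleton_iff]
        constructor
        · rintro ⟨he, rfl | rfl | rfl | rfl⟩
          · exact absurd ((G k).mem_edgeSet.mp he) h1
          · exact Or.inl rfl
          · exact absurd ((G k).mem_edgeSet.mp he) h3
          · exact Or.inr rfl
        · rintro (rfl | rfl)
          · exact ⟨(G k).mem_edgeSet.mpr h2, Or.inr (Or.inl rfl)⟩
          · exact ⟨(G k).mem_edgeSet.mpr h4, Or.inr (Or.inr (Or.inr rfl))⟩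
      rw [hk, Set.ncard_pair hne3]
    · refine inter4_ncard_zero _ ?_ ?_ ?_ ?_
      · exact fun h => nr a c d hac hcd had.symm h jcd h2.symm
      · exact fun h => nr d a b had.symm hab hbd h.symm jab h4
      · exact fun h => nr b c d hbc hcd hbd.symm h jcd h4.symm
      · exact fun h => nr d b a hbd.symm hab.symm had h.symm jab.symm h2
    · refine inter4_ncard_zero _ ?_ ?_ ?_ ?_
      · exact fun h => nrj a c d hac hcd had.symm h icd h2.symm
      · exact fun h => nrj d a b had.symm hab hbd h.symm iab h4
      · exact fun h => nrj b c d hbc hcd hbd.symm h icd h4.symm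
      · exact fun h => nrj d b a hbd.symm hab.symm had h.symm iab.symm h2
  · refine Or.inr (Or.inl ⟨?_, ?_, ?_⟩)
    · have hk : (G k).edgeSet ∩ {s(a, c), s(a, d), s(b, c), s(b, d)} = {s(a, d)} := by
        ext e
        simp only [Set.mem_inter_iff, Set.mem_insert_iff, Set.mem_singleton_iff]
        constructor
        · rintro ⟨he, rfl | rfl | rfl | rfl⟩
          · exact absurd ((G k).mem_edgeSet.mp he) h1
          · rfl
          · exact absurd ((G k).mem_edgeSet.mp he) h3
          · exact absurd ((G k).mem_edgeSet.mp he) h4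
        · rintro rfl
          exact ⟨(G k).mem_edgeSet.mpr h2, Or.inr (Or.inl rfl)⟩
      rw [hk, Set.ncard_singleton]
    · apply ncard_le_two_of_subset_pair (p := s(a, d)) (q := s(b, c))
      intro e he
      simp only [Set.mem_inter_iff, Set.mem_insert_iff, Set.mem_singleton_iff] at he ⊢
      obtain ⟨hee, rfl | rfl | rfl | rfl⟩ := he
      · exact absurd ((G i).mem_edgeSet.mp hee) (fun h => nr a c d hac hcd had.symm h jcd h2.symm)
      · exact Or.inl rfl
      · exact Or.inr rfl
      · exact absurd ((G i).mem_edgeSet.mp hee) (fun h => nr d b a hbd.symm hab.symm had h.symm jab.symm h2)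
    · apply ncard_le_two_of_subset_pair (p := s(a, d)) (q := s(b, c))
      intro e he
      simp only [Set.mem_inter_iff, Set.mem_insert_iff, Set.mem_singleton_iff] at he ⊢
      obtain ⟨hee, rfl | rfl | rfl | rfl⟩ := he
      · exact absurd ((G j).mem_edgeSet.mp hee) (fun h => nrj a c d hac hcd had.symm h icd h2.symm)
      · exact Or.inl rfl
      · exact Or.inr rfl
      · exact absurd ((G j).mem_edgeSet.mp hee) (fun h => nrj d b a hbd.symm hab.symm had h.symm iab.symm h2)
  · refine Or.inr (Or.inr ⟨?_, ?_, ?_⟩)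
    · have hk : (G k).edgeSet ∩ {s(a, c), s(a, d), s(b, c), s(b, d)} = {s(b, c), s(b, d)} := by
        ext e
        simp only [Set.mem_inter_iff, Set.mem_insert_iff, Set.mem_singleton_iff]
        constructor
        · rintro ⟨he, rfl | rfl | rfl | rfl⟩
          · exact absurd ((G k).mem_edgeSet.mp he) h1
          · exact absurd ((G k).mem_edgeSet.mp he) h2
          · exact Or.inl rfl
          · exact Or.inr rfl
        · rintro (rfl | rfl)
          · exact ⟨(G k).mem_edgeSet.mpr h3, Or.inr (Or.inr (Or.inl rfl))⟩
          · exact ⟨(G k).mem_edgeSet.mpr h4, Or.inr (Or.inr (Or.inr rfl))⟩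
      rw [hk, Set.ncard_pair hne4]
    · refine inter4_ncard_zero _ ?_ ?_ ?_ ?_
      · exact fun h => nr c a b hac.symm hab hbc h.symm jab h3
      · exact fun h => nr d a b had.symm hab hbd h.symm jab h4
      · exact fun h => nr b c d hbc hcd hbd.symm h jcd h4.symm
      · exact fun h => nr b d c hbd hcd.symm hbc.symm h jcd.symm h3.symm
    · refine inter4_ncard_zero _ ?_ ?_ ?_ ?_
      · exact fun h => nrj c a b hac.symm hab hbc h.symm iab h3
      · exact fun h => nrj d a b had.symm hab hbd h.symm iab h4
      · exact fun h => nrj b c d hbc hcd hbd.symm h icd h4.symm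
      · exact fun h => nrj b d c hbd hcd.symm hbc.symm h icd.symm h3.symm
  · refine Or.inr (Or.inl ⟨?_, ?_, ?_⟩)
    · have hk : (G k).edgeSet ∩ {s(a, c), s(a, d), s(b, c), s(b, d)} = {s(b, c)} := by
        ext e
        simp only [Set.mem_inter_iff, Set.mem_insert_iff, Set.mem_singleton_iff]
        constructor
        · rintro ⟨he, rfl | rfl | rfl | rfl⟩
          · exact absurd ((G k).mem_edgeSet.mp he) h1
          · exact absurd ((G k).mem_edgeSet.mp he) h2
          · rfl
          · exact absurd ((G k).mem_edgeSet.mp he) h4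
        · rintro rfl
          exact ⟨(G k).mem_edgeSet.mpr h3, Or.inr (Or.inr (Or.inl rfl))⟩
      rw [hk, Set.ncard_singleton]
    · apply ncard_le_two_of_subset_pair (p := s(a, d)) (q := s(b, c))
      intro e he
      simp only [Set.mem_inter_iff, Set.mem_insert_iff, Set.mem_singleton_iff] at he ⊢
      obtain ⟨hee, rfl | rfl | rfl | rfl⟩ := he
      · exact absurd ((G i).mem_edgeSet.mp hee) (fun h => nr c a b hac.symm hab hbc h.symm jab h3)
      · exact Or.inl rfl
      · exact Or.inr rfl
      · exact absurd ((G i).mem_edgeSet.mp hee) (fun h => nr b d c hbd hcd.symm hbc.symm h jcd.symm h3.symm)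
    · apply ncard_le_two_of_subset_pair (p := s(a, d)) (q := s(b, c))
      intro e he
      simp only [Set.mem_inter_iff, Set.mem_insert_iff, Set.mem_singleton_iff] at he ⊢
      obtain ⟨hee, rfl | rfl | rfl | rfl⟩ := he
      · exact absurd ((G j).mem_edgeSet.mp hee) (fun h => nrj c a b hac.symm hab hbc h.symm iab h3)
      · exact Or.inl rfl
      · exact Or.inr rfl
      · exact absurd ((G j).mem_edgeSet.mp hee) (fun h => nrj b d c hbd hcd.symm hbc.symm h icd.symm h3.symm)
  · refine Or.inr (Or.inl ⟨?_, ?_, ?_⟩)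
    · have hk : (G k).edgeSet ∩ {s(a, c), s(a, d), s(b, c), s(b, d)} = {s(b, d)} := by
        ext e
        simp only [Set.mem_inter_iff, Set.mem_insert_iff, Set.mem_singleton_iff]
        constructor
        · rintro ⟨he, rfl | rfl | rfl | rfl⟩
          · exact absurd ((G k).mem_edgeSet.mp he) h1
          · exact absurd ((G k).mem_edgeSet.mp he) h2
          · exact absurd ((G k).mem_edgeSet.mp he) h3
          · rfl
        · rintro rfl
          exact ⟨(G k).mem_edgeSet.mpr h4, Or.inr (Or.inr (Or.inr rfl))⟩
      rw [hk, Set.ncard_singleton]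
    · apply ncard_le_two_of_subset_pair (p := s(a, c)) (q := s(b, d))
      intro e he
      simp only [Set.mem_inter_iff, Set.mem_insert_iff, Set.mem_singleton_iff] at he ⊢
      obtain ⟨hee, rfl | rfl | rfl | rfl⟩ := he
      · exact Or.inl rfl
      · exact absurd ((G i).mem_edgeSet.mp hee) (fun h => nr d a b had.symm hab hbd h.symm jab h4)
      · exact absurd ((G i).mem_edgeSet.mp hee) (fun h => nr b c d hbc hcd hbd.symm h jcd h4.symm)
      · exact Or.inr rfl
    · apply ncard_le_two_of_subset_pair (p := s(a, c)) (q := s(b, d))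
      intro e he
      simp only [Set.mem_inter_iff, Set.mem_insert_iff, Set.mem_singleton_iff] at he ⊢
      obtain ⟨hee, rfl | rfl | rfl | rfl⟩ := he
      · exact Or.inl rfl
      · exact absurd ((G j).mem_edgeSet.mp hee) (fun h => nrj d a b had.symm hab hbd h.symm iab h4)
      · exact absurd ((G j).mem_edgeSet.mp hee) (fun h => nrj b c d hbc hcd hbd.symm h icd h4.symm)
      · exact Or.inr rfl
  · exact Or.inl (inter4_ncard_zero _ h1 h2 h3 h4)
end

section
/- Let G₁, G₂, G₃ be simple graphs on a common set V such that there is no rainbow triangle and there is no nonempty set S ⊆ V for which every Gᵢ[S] (1 ≤ i ≤ 3) has a perfect matching. Let {i, j, k} = {1, 2, 3} and let X, X′ ⊆ V be disjoint 2-element sets with e_i(X) = e_j(X) = 1, e_k(X) = 0, and e_i(X′) = e_k(X′) = 1, e_j(X′) = 0. Then, writing e(X, X′) = e₁(X, X′) + e₂(X, X′) + e₃(X, X′), one of the following holds: (a) e(X, X′) ≤ 4; or (b) e(X, X′) = 5 with e_i(X, X′) = 3 and e_j(X, X′) = e_k(X, X′) = 1. -/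
set_option maxHeartbeats 4000000
set_option synthInstance.maxHeartbeats 2000000
set_option synthInstance.maxSize 2000

/- ## Auxiliary lemmas -/

lemma fin3_cases : ∀ i j k m : Fin 3, i ≠ j → j ≠ k → i ≠ k → (m = i ∨ m = j ∨ m = k) := by
  decide

lemma toNat_decide (p : Prop) [Decidable p] : (decide p).toNat = if p then 1 else 0 := by
  by_cases h : p <;> simp [h]

lemma sum3_perm (f : Fin 3 → ℕ) (i j k : Fin 3) (hij : i ≠ j) (hjk : j ≠ k) (hik : i ≠ k) :
    f 0 + f 1 + f 2 = f i + f j + f k := by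
  fin_cases i <;> fin_cases j <;> fin_cases k <;> simp_all <;> ring

lemma ncard_inter_singleton {α : Type*} (A : Set α) (x : α) [Decidable (x ∈ A)] :
    (A ∩ {x}).ncard = if x ∈ A then 1 else 0 := by
  split_ifs with h
  · rw [show A ∩ {x} = {x} by
      ext y
      simp only [Set.mem_inter_iff, Set.mem_singleton_iff]
      exact ⟨fun h' => h'.2, fun h' => ⟨h' ▸ h, h'⟩⟩]
    exact Set.ncard_singleton x
  · rw [show A ∩ {x} = ∅ by
      ext y
      simp only [Set.mem_inter_iff, Set.mem_singleton_iff, Set.mem_empty_iff_false, iff_false,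
        not_and]
      rintro hy rfl; exact h hy]
    simp

lemma edgesWithin_pair {V : Type*} (G : SimpleGraph V) (a b : V) (hab : a ≠ b)
    [Decidable (G.Adj a b)] :
    edgesWithin G {a, b} = if G.Adj a b then 1 else 0 := by
  unfold edgesWithin
  have hset : {e ∈ G.edgeSet | ∀ v ∈ e, v ∈ ({a, b} : Set V)} = G.edgeSet ∩ {s(a, b)} := by
    ext e
    induction e with
    | h x y =>
      simp only [Set.mem_setOf_eq, Set.mem_inter_iff, Set.mem_singleton_iff, Sym2.mem_iff,
        SimpleGraph.mem_edgeSet, Set.mem_insert_iff]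
      constructor
      · rintro ⟨hadj, hv⟩
        refine ⟨hadj, ?_⟩
        have hx := hv x (Or.inl rfl)
        have hy := hv y (Or.inr rfl)
        have hxy := hadj.ne
        rcases hx with rfl | rfl
        · rcases hy with rfl | rfl
          · exact absurd rfl hxy
          · rfl
        · rcases hy with rfl | rfl
          · exact Sym2.eq_swap
          · exact absurd rfl hxy
      · rintro ⟨hadj, he⟩
        refine ⟨hadj, ?_⟩
        intro v hv
        rcases Sym2.eq_iff.mp he with ⟨rfl, rfl⟩ | ⟨rfl, rfl⟩ <;> tauto
  haveI : Decidable (s(a, b) ∈ G.edgeSet) := decidable_of_iff (G.Adj a b) (by simp)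
  rw [hset, ncard_inter_singleton]
  simp [SimpleGraph.mem_edgeSet]

lemma edgesBetween_pair_s12 {V : Type*} (G : SimpleGraph V) (a b c d : V)
    (hab : a ≠ b) (hcd : c ≠ d) (hac : a ≠ c) (had : a ≠ d) (hbc : b ≠ c) (hbd : b ≠ d)
    [Decidable (G.Adj a c)] [Decidable (G.Adj a d)]
    [Decidable (G.Adj b c)] [Decidable (G.Adj b d)] :
    edgesBetween G {a, b} {c, d} =
      (if G.Adj a c then 1 else 0) + (if G.Adj a d then 1 else 0) +
      (if G.Adj b c then 1 else 0) + (if G.Adj b d then 1 else 0) := by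
  unfold edgesBetween
  have hset : {e ∈ G.edgeSet | ∃ x ∈ ({a, b} : Set V), ∃ y ∈ ({c, d} : Set V), e = s(x, y)} =
      (G.edgeSet ∩ {s(a, c)}) ∪ ((G.edgeSet ∩ {s(a, d)}) ∪
        ((G.edgeSet ∩ {s(b, c)}) ∪ (G.edgeSet ∩ {s(b, d)}))) := by
    ext e
    simp only [Set.mem_setOf_eq, Set.mem_union, Set.mem_inter_iff, Set.mem_singleton_iff,
      Set.mem_insert_iff]
    constructor
    · rintro ⟨he, x, (rfl | rfl), y, (rfl | rfl), rfl⟩ <;> tauto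
    · rintro (⟨he, rfl⟩ | ⟨he, rfl⟩ | ⟨he, rfl⟩ | ⟨he, rfl⟩)
      exacts [⟨he, a, Or.inl rfl, c, Or.inl rfl, rfl⟩, ⟨he, a, Or.inl rfl, d, Or.inr rfl, rfl⟩,
        ⟨he, b, Or.inr rfl, c, Or.inl rfl, rfl⟩, ⟨he, b, Or.inr rfl, d, Or.inr rfl, rfl⟩]
  have hfin : ∀ x : Sym2 V, (G.edgeSet ∩ {x}).Finite :=
    fun x => Set.Finite.inter_of_right (Set.finite_singleton x) _
  have hd : ∀ x y : Sym2 V, x ≠ y → Disjoint (G.edgeSet ∩ {x}) (G.edgeSet ∩ {y}) := by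
    intro x y hxy
    refine Set.disjoint_left.mpr ?_
    rintro e ⟨_, he1⟩ ⟨_, he2⟩
    simp only [Set.mem_singleton_iff] at he1 he2
    exact hxy (he1 ▸ he2)
  have n12 : s(a, c) ≠ s(a, d) := by simp [Sym2.eq_iff, hcd, had]
  have n13 : s(a, c) ≠ s(b, c) := by simp [Sym2.eq_iff, hab, hac]
  have n14 : s(a, c) ≠ s(b, d) := by simp [Sym2.eq_iff, hab, had]
  have n23 : s(a, d) ≠ s(b, c) := by simp [Sym2.eq_iff, hab, hac]
  have n24 : s(a, d) ≠ s(b, d) := by simp [Sym2.eq_iff, hab, had]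
  have n34 : s(b, c) ≠ s(b, d) := by simp [Sym2.eq_iff, hcd, hbd]
  haveI : Decidable (s(a, c) ∈ G.edgeSet) := decidable_of_iff (G.Adj a c) (by simp)
  haveI : Decidable (s(a, d) ∈ G.edgeSet) := decidable_of_iff (G.Adj a d) (by simp)
  haveI : Decidable (s(b, c) ∈ G.edgeSet) := decidable_of_iff (G.Adj b c) (by simp)
  haveI : Decidable (s(b, d) ∈ G.edgeSet) := decidable_of_iff (G.Adj b d) (by simp)
  rw [hset,
    Set.ncard_union_eq
      (Set.disjoint_union_right.mpr
        ⟨hd _ _ n12, Set.disjoint_union_right.mpr ⟨hd _ _ n13, hd _ _ n14⟩⟩)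
      (hfin _) (((hfin _).union ((hfin _).union (hfin _)))),
    Set.ncard_union_eq
      (Set.disjoint_union_right.mpr ⟨hd _ _ n23, hd _ _ n24⟩) (hfin _) ((hfin _).union (hfin _)),
    Set.ncard_union_eq (hd _ _ n34) (hfin _) (hfin _),
    ncard_inter_singleton, ncard_inter_singleton, ncard_inter_singleton, ncard_inter_singleton]
  simp only [SimpleGraph.mem_edgeSet]
  ring

lemma pm_pair {V : Type*} (G : SimpleGraph V) (p q : V) (hpq : G.Adj p q) (S : Set V)
    (hS : ∀ v, v ∈ S ↔ v = p ∨ v = q) : HasPerfectMatchingOn G S := by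
  refine ⟨{s(p, q)}, ?_, ?_, ?_⟩
  · rintro e he
    simp only [Set.mem_singleton_iff] at he
    subst he; simpa using hpq
  · intro e he v hv
    simp only [Set.mem_singleton_iff] at he
    subst he
    rw [hS]
    exact Sym2.mem_iff.mp hv
  · intro x hx
    refine ⟨s(p, q), ⟨rfl, ?_⟩, ?_⟩
    · rcases (hS x).1 hx with rfl | rfl
      · exact Sym2.mem_mk_left _ _
      · exact Sym2.mem_mk_right _ _
    · rintro e ⟨he, -⟩
      simpa using he

lemma pm_two_s12 {V : Type*} (G : SimpleGraph V) (p q r s' : V)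
    (hpq : G.Adj p q) (hrs : G.Adj r s')
    (hpr : p ≠ r) (hps : p ≠ s') (hqr : q ≠ r) (hqs : q ≠ s') (S : Set V)
    (hS : ∀ v, v ∈ S ↔ v = p ∨ v = q ∨ v = r ∨ v = s') : HasPerfectMatchingOn G S := by
  refine ⟨{s(p, q), s(r, s')}, ?_, ?_, ?_⟩
  · rintro e he
    simp only [Set.mem_insert_iff, Set.mem_singleton_iff] at he
    rcases he with rfl | rfl
    · simpa using hpq
    · simpa using hrs
  · intro e he v hv
    simp only [Set.mem_insert_iff, Set.mem_singleton_iff] at he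
    rcases he with rfl | rfl <;> rw [hS] <;> rcases Sym2.mem_iff.mp hv with rfl | rfl <;> tauto
  · intro x hx
    rcases (hS x).1 hx with h | h | h | h <;> rw [h]
    · refine ⟨s(p, q), ⟨Or.inl rfl, Sym2.mem_mk_left _ _⟩, ?_⟩
      rintro e ⟨he, hx'⟩
      simp only [Set.mem_insert_iff, Set.mem_singleton_iff] at he
      rcases he with rfl | rfl
      · rfl
      · rcases Sym2.mem_iff.mp hx' with rfl | rfl
        · exact absurd rfl hpr
        · exact absurd rfl hps
    · refine ⟨s(p, q), ⟨Or.inl rfl, Sym2.mem_mk_right _ _⟩, ?_⟩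
      rintro e ⟨he, hx'⟩
      simp only [Set.mem_insert_iff, Set.mem_singleton_iff] at he
      rcases he with rfl | rfl
      · rfl
      · rcases Sym2.mem_iff.mp hx' with rfl | rfl
        · exact absurd rfl hqr
        · exact absurd rfl hqs
    · refine ⟨s(r, s'), ⟨Or.inr rfl, Sym2.mem_mk_left _ _⟩, ?_⟩
      rintro e ⟨he, hx'⟩
      simp only [Set.mem_insert_iff, Set.mem_singleton_iff] at he
      rcases he with rfl | rfl
      · rcases Sym2.mem_iff.mp hx' with rfl | rfl
        · exact absurd rfl hpr.symm
        · exact absurd rfl hqr.symm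
      · rfl
    · refine ⟨s(r, s'), ⟨Or.inr rfl, Sym2.mem_mk_right _ _⟩, ?_⟩
      rintro e ⟨he, hx'⟩
      simp only [Set.mem_insert_iff, Set.mem_singleton_iff] at he
      rcases he with rfl | rfl
      · rcases Sym2.mem_iff.mp hx' with rfl | rfl
        · exact absurd rfl hps.symm
        · exact absurd rfl hqs.symm
      · rfl

lemma no_rainbow {V : Type*} (G : Fin 3 → SimpleGraph V)
    (hNR : ¬ HasRainbowTriangle (G 0) (G 1) (G 2))
    (i j k : Fin 3) (hij : i ≠ j) (hjk : j ≠ k) (hik : i ≠ k)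
    (x y z : V) (hxy : x ≠ y) (hyz : y ≠ z) (hzx : z ≠ x)
    (h1 : (G i).Adj x y) (h2 : (G j).Adj y z) (h3 : (G k).Adj z x) : False := by
  refine hNR ?_
  fin_cases i <;> fin_cases j <;> fin_cases k <;>
    first
    | exact absurd rfl hij
    | exact absurd rfl hjk
    | exact absurd rfl hik
    | exact ⟨x, y, z, hxy, hyz, hzx, h1, h2, h3⟩
    | exact ⟨y, x, z, hxy.symm, hzx.symm, hyz.symm, h1.symm, h3.symm, h2.symm⟩
    | exact ⟨z, y, x, hyz.symm, hxy.symm, hzx.symm, h2.symm, h1.symm, h3.symm⟩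
    | exact ⟨z, x, y, hzx, hxy, hyz, h3, h1, h2⟩
    | exact ⟨y, z, x, hyz, hzx, hxy, h2, h3, h1⟩
    | exact ⟨x, z, y, hzx.symm, hyz.symm, hxy.symm, h3.symm, h2.symm, h1.symm⟩

lemma core12 (aci acj ack adi adj adk bci bcj bck bdi bdj bdk : Bool)
    (t1 : ¬(ack = true ∧ (bci = true ∨ bcj = true)))
    (t2 : ¬(bck = true ∧ (aci = true ∨ acj = true)))
    (t3 : ¬(adk = true ∧ (bdi = true ∨ bdj = true)))
    (t4 : ¬(bdk = true ∧ (adi = true ∨ adj = true)))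
    (t5 : ¬(acj = true ∧ (adi = true ∨ adk = true)))
    (t6 : ¬(adj = true ∧ (aci = true ∨ ack = true)))
    (t7 : ¬(bcj = true ∧ (bdi = true ∨ bdk = true)))
    (t8 : ¬(bdj = true ∧ (bci = true ∨ bck = true)))
    (s1 : ¬(aci = true ∧ acj = true ∧ ack = true))
    (s2 : ¬(adi = true ∧ adj = true ∧ adk = true))
    (s3 : ¬(bci = true ∧ bcj = true ∧ bck = true))
    (s4 : ¬(bdi = true ∧ bdj = true ∧ bdk = true))
    (mt : ¬(((acj = true ∧ bdj = true) ∨ (adj = true ∧ bcj = true)) ∧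
            ((ack = true ∧ bdk = true) ∨ (adk = true ∧ bck = true)))) :
    ((aci.toNat + adi.toNat + bci.toNat + bdi.toNat) +
     (acj.toNat + adj.toNat + bcj.toNat + bdj.toNat) +
     (ack.toNat + adk.toNat + bck.toNat + bdk.toNat) ≤ 4) ∨
    (((aci.toNat + adi.toNat + bci.toNat + bdi.toNat) +
      (acj.toNat + adj.toNat + bcj.toNat + bdj.toNat) +
      (ack.toNat + adk.toNat + bck.toNat + bdk.toNat) = 5) ∧
     aci.toNat + adi.toNat + bci.toNat + bdi.toNat = 3 ∧
     acj.toNat + adj.toNat + bcj.toNat + bdj.toNat = 1 ∧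
     ack.toNat + adk.toNat + bck.toNat + bdk.toNat = 1) := by
  revert aci acj ack adi adj adk bci bcj bck bdi bdj bdk
  decide

theorem digon_pair_structure_different_colours {V : Type*} [Fintype V]
    (G : Fin 3 → SimpleGraph V)
    (hNR : ¬ HasRainbowTriangle (G 0) (G 1) (G 2))
    (hPM : ¬ ∃ S : Set V, S.Nonempty ∧ ∀ m : Fin 3, HasPerfectMatchingOn (G m) S)
    (i j k : Fin 3) (hij : i ≠ j) (hjk : j ≠ k) (hik : i ≠ k)
    (X X' : Set V) (hX : X.ncard = 2) (hX' : X'.ncard = 2) (hdisj : Disjoint X X')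
    (hiX : edgesWithin (G i) X = 1) (hjX : edgesWithin (G j) X = 1)
    (hkX : edgesWithin (G k) X = 0)
    (hiX' : edgesWithin (G i) X' = 1) (hkX' : edgesWithin (G k) X' = 1)
    (hjX' : edgesWithin (G j) X' = 0) :
    (edgesBetween (G 0) X X' + edgesBetween (G 1) X X' + edgesBetween (G 2) X X' ≤ 4) ∨
    (edgesBetween (G 0) X X' + edgesBetween (G 1) X X' + edgesBetween (G 2) X X' = 5 ∧
      edgesBetween (G i) X X' = 3 ∧
      edgesBetween (G j) X X' = 1 ∧ edgesBetween (G k) X X' = 1) := by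
  classical
  obtain ⟨a, b, hab, rfl⟩ := Set.ncard_eq_two.mp hX
  obtain ⟨c, d, hcd, rfl⟩ := Set.ncard_eq_two.mp hX'
  have haX' : a ∉ ({c, d} : Set V) := Set.disjoint_left.mp hdisj (by simp)
  have hbX' : b ∉ ({c, d} : Set V) := Set.disjoint_left.mp hdisj (by simp)
  have hac : a ≠ c := fun h => haX' (by simp [h])
  have had : a ≠ d := fun h => haX' (by simp [h])
  have hbc : b ≠ c := fun h => hbX' (by simp [h])
  have hbd : b ≠ d := fun h => hbX' (by simp [h])
  have iab : (G i).Adj a b := by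
    have h := edgesWithin_pair (G i) a b hab; rw [hiX] at h
    by_contra hcon; simp [hcon] at h
  have jab : (G j).Adj a b := by
    have h := edgesWithin_pair (G j) a b hab; rw [hjX] at h
    by_contra hcon; simp [hcon] at h
  have kab : ¬ (G k).Adj a b := by
    have h := edgesWithin_pair (G k) a b hab; rw [hkX] at h
    intro hcon; simp [hcon] at h
  have icd : (G i).Adj c d := by
    have h := edgesWithin_pair (G i) c d hcd; rw [hiX'] at h
    by_contra hcon; simp [hcon] at h
  have kcd : (G k).Adj c d := by
    have h := edgesWithin_pair (G k) c d hcd; rw [hkX'] at h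
    by_contra hcon; simp [hcon] at h
  have jcd : ¬ (G j).Adj c d := by
    have h := edgesWithin_pair (G j) c d hcd; rw [hjX'] at h
    intro hcon; simp [hcon] at h
  have key := core12
    (decide ((G i).Adj a c)) (decide ((G j).Adj a c)) (decide ((G k).Adj a c))
    (decide ((G i).Adj a d)) (decide ((G j).Adj a d)) (decide ((G k).Adj a d))
    (decide ((G i).Adj b c)) (decide ((G j).Adj b c)) (decide ((G k).Adj b c))
    (decide ((G i).Adj b d)) (decide ((G j).Adj b d)) (decide ((G k).Adj b d))
    (by
      simp only [decide_eq_true_eq]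
      rintro ⟨hk1, h2 | h2⟩
      · exact no_rainbow G hNR i k j hik hjk.symm hij b c a hbc hac.symm hab h2 hk1.symm jab
      · exact no_rainbow G hNR j k i hjk hik.symm hij.symm b c a hbc hac.symm hab h2 hk1.symm iab)
    (by
      simp only [decide_eq_true_eq]
      rintro ⟨hk1, h2 | h2⟩
      · exact no_rainbow G hNR i k j hik hjk.symm hij a c b hac hbc.symm hab.symm h2 hk1.symm
          jab.symm
      · exact no_rainbow G hNR j k i hjk hik.symm hij.symm a c b hac hbc.symm hab.symm h2
          hk1.symm iab.symm)
    (by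
      simp only [decide_eq_true_eq]
      rintro ⟨hk1, h2 | h2⟩
      · exact no_rainbow G hNR i k j hik hjk.symm hij b d a hbd had.symm hab h2 hk1.symm jab
      · exact no_rainbow G hNR j k i hjk hik.symm hij.symm b d a hbd had.symm hab h2 hk1.symm iab)
    (by
      simp only [decide_eq_true_eq]
      rintro ⟨hk1, h2 | h2⟩
      · exact no_rainbow G hNR i k j hik hjk.symm hij a d b had hbd.symm hab.symm h2 hk1.symm
          jab.symm
      · exact no_rainbow G hNR j k i hjk hik.symm hij.symm a d b had hbd.symm hab.symm h2
          hk1.symm iab.symm)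
    (by
      simp only [decide_eq_true_eq]
      rintro ⟨hj1, h2 | h2⟩
      · exact no_rainbow G hNR i j k hij hjk hik d a c had.symm hac hcd h2.symm hj1 kcd
      · exact no_rainbow G hNR k j i hjk.symm hij.symm hik.symm d a c had.symm hac hcd h2.symm
          hj1 icd)
    (by
      simp only [decide_eq_true_eq]
      rintro ⟨hj1, h2 | h2⟩
      · exact no_rainbow G hNR i j k hij hjk hik c a d hac.symm had hcd.symm h2.symm hj1 kcd.symm
      · exact no_rainbow G hNR k j i hjk.symm hij.symm hik.symm c a d hac.symm had hcd.symm
          h2.symm hj1 icd.symm)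
    (by
      simp only [decide_eq_true_eq]
      rintro ⟨hj1, h2 | h2⟩
      · exact no_rainbow G hNR i j k hij hjk hik d b c hbd.symm hbc hcd h2.symm hj1 kcd
      · exact no_rainbow G hNR k j i hjk.symm hij.symm hik.symm d b c hbd.symm hbc hcd h2.symm
          hj1 icd)
    (by
      simp only [decide_eq_true_eq]
      rintro ⟨hj1, h2 | h2⟩
      · exact no_rainbow G hNR i j k hij hjk hik c b d hbc.symm hbd hcd.symm h2.symm hj1 kcd.symm
      · exact no_rainbow G hNR k j i hjk.symm hij.symm hik.symm c b d hbc.symm hbd hcd.symm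
          h2.symm hj1 icd.symm)
    (by
      simp only [decide_eq_true_eq]
      rintro ⟨h1, h2, h3⟩
      refine hPM ⟨{a, c}, ⟨a, by simp⟩, ?_⟩
      intro m
      rcases fin3_cases i j k m hij hjk hik with h | h | h <;> rw [h]
      exacts [pm_pair _ _ _ h1 _ (fun v => by simp), pm_pair _ _ _ h2 _ (fun v => by simp),
        pm_pair _ _ _ h3 _ (fun v => by simp)])
    (by
      simp only [decide_eq_true_eq]
      rintro ⟨h1, h2, h3⟩
      refine hPM ⟨{a, d}, ⟨a, by simp⟩, ?_⟩
      intro m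
      rcases fin3_cases i j k m hij hjk hik with h | h | h <;> rw [h]
      exacts [pm_pair _ _ _ h1 _ (fun v => by simp), pm_pair _ _ _ h2 _ (fun v => by simp),
        pm_pair _ _ _ h3 _ (fun v => by simp)])
    (by
      simp only [decide_eq_true_eq]
      rintro ⟨h1, h2, h3⟩
      refine hPM ⟨{b, c}, ⟨b, by simp⟩, ?_⟩
      intro m
      rcases fin3_cases i j k m hij hjk hik with h | h | h <;> rw [h]
      exacts [pm_pair _ _ _ h1 _ (fun v => by simp), pm_pair _ _ _ h2 _ (fun v => by simp),
        pm_pair _ _ _ h3 _ (fun v => by simp)])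
    (by
      simp only [decide_eq_true_eq]
      rintro ⟨h1, h2, h3⟩
      refine hPM ⟨{b, d}, ⟨b, by simp⟩, ?_⟩
      intro m
      rcases fin3_cases i j k m hij hjk hik with h | h | h <;> rw [h]
      exacts [pm_pair _ _ _ h1 _ (fun v => by simp), pm_pair _ _ _ h2 _ (fun v => by simp),
        pm_pair _ _ _ h3 _ (fun v => by simp)])
    (by
      simp only [decide_eq_true_eq]
      rintro ⟨hmj, hmk⟩
      refine hPM ⟨{a, b, c, d}, ⟨a, by simp⟩, ?_⟩
      intro m
      rcases fin3_cases i j k m hij hjk hik with h | h | h <;> rw [h]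
      · exact pm_two_s12 (G i) a b c d iab icd hac had hbc hbd _
          (fun v => by simp only [Set.mem_insert_iff, Set.mem_singleton_iff]; try tauto)
      · rcases hmj with ⟨h1, h2⟩ | ⟨h1, h2⟩
        · exact pm_two_s12 (G j) a c b d h1 h2 hab had hbc.symm hcd _
            (fun v => by simp only [Set.mem_insert_iff, Set.mem_singleton_iff]; try tauto)
        · exact pm_two_s12 (G j) a d b c h1 h2 hab hac hbd.symm hcd.symm _
            (fun v => by simp only [Set.mem_insert_iff, Set.mem_singleton_iff]; try tauto)
      · rcases hmk with ⟨h1, h2⟩ | ⟨h1, h2⟩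
        · exact pm_two_s12 (G k) a c b d h1 h2 hab had hbc.symm hcd _
            (fun v => by simp only [Set.mem_insert_iff, Set.mem_singleton_iff]; try tauto)
        · exact pm_two_s12 (G k) a d b c h1 h2 hab hac hbd.symm hcd.symm _
            (fun v => by simp only [Set.mem_insert_iff, Set.mem_singleton_iff]; try tauto))
  simp only [toNat_decide] at key
  have cntI := edgesBetween_pair_s12 (G i) a b c d hab hcd hac had hbc hbd
  have cntJ := edgesBetween_pair_s12 (G j) a b c d hab hcd hac had hbc hbd
  have cntK := edgesBetween_pair_s12 (G k) a b c d hab hcd hac had hbc hbd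
  have hsum : edgesBetween (G 0) {a, b} {c, d} + edgesBetween (G 1) {a, b} {c, d} +
      edgesBetween (G 2) {a, b} {c, d} =
      edgesBetween (G i) {a, b} {c, d} + edgesBetween (G j) {a, b} {c, d} +
      edgesBetween (G k) {a, b} {c, d} :=
    sum3_perm (fun m => edgesBetween (G m) {a, b} {c, d}) i j k hij hjk hik
  rw [hsum, cntI, cntJ, cntK]
  exact key
end

section
/- Let τ = (4 − √7)/9. There do not exist nonnegative real numbers a, b, c, d with a ≥ b ≥ c and a + b + c + d = 1 satisfying all three of the following inequalities: (1) c² + cd ≥ τ²; (2) a² + 2b² + 2c² + 2bd + 2cd ≥ 1/2 + (7/2)τ²; (3) a² + b² + c² + d(a + b + c) > 1/2 + (3/2)τ². -/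
set_option maxHeartbeats 2000000 in
theorem no_solution_to_inequalities :
    ¬ ∃ a b c d : ℝ, 0 ≤ a ∧ 0 ≤ b ∧ 0 ≤ c ∧ 0 ≤ d ∧ a ≥ b ∧ b ≥ c ∧
      a + b + c + d = 1 ∧
      c ^ 2 + c * d ≥ tau ^ 2 ∧
      a ^ 2 + 2 * b ^ 2 + 2 * c ^ 2 + 2 * b * d + 2 * c * d ≥ 1 / 2 + 7 / 2 * tau ^ 2 ∧
      a ^ 2 + b ^ 2 + c ^ 2 + d * (a + b + c) > 1 / 2 + 3 / 2 * tau ^ 2 := by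
  rintro ⟨a, b, c, d, ha, hb, hc, hd, hab, hbc, hsum, h1, h2, h3⟩
  have h7 : Real.sqrt 7 ^ 2 = 7 := Real.sq_sqrt (by norm_num)
  have h7nn : 0 ≤ Real.sqrt 7 := Real.sqrt_nonneg 7
  have ht : 9 * tau ^ 2 - 8 * tau + 1 = 0 := by unfold tau; nlinarith [h7]
  have htlb : (0.15 : ℝ) < tau := by unfold tau; nlinarith [h7, h7nn]
  have htub : tau < 0.1506 := by unfold tau; nlinarith [h7, h7nn]
  have ha2 : a = 1 - b - c - d := by linarith
  subst ha2
  rcases eq_or_lt_of_le hd with hd0 | hd0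
  · have hd0' : d = 0 := hd0.symm
    subst hd0'
    have s1 : 0 ≤ c ^ 2 + c * 0 - tau ^ 2 := by linarith
    have hct : tau ≤ c := by nlinarith [s1, hc, htlb]
    have P1 : 0 ≤ 2 * (b + c - 2 * tau) * (1 - 2 * b - c + (b - tau)) := by
      have : 0 ≤ b + c - 2 * tau := by linarith
      have h2' : 0 ≤ 1 - 2 * b - c + (b - tau) := by linarith
      positivity
    have P2 : 0 ≤ 2 * (b - tau) * (c - tau) := by
      have : 0 ≤ b - tau := by linarith
      have h2' : 0 ≤ c - tau := by linarith
      positivity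
    nlinarith [h3, P1, P2, ht]
  · obtain ⟨G1, hG1⟩ : ∃ x : ℝ, x = c ^ 2 + c * d - tau ^ 2 := ⟨_, rfl⟩
    obtain ⟨G2, hG2⟩ : ∃ x : ℝ, x = ((1 - b - c - d) ^ 2 + 2 * b ^ 2 + 2 * c ^ 2 + 2 * b * d + 2 * c * d - (1 / 2 + 7 / 2 * tau ^ 2)) := ⟨_, rfl⟩
    obtain ⟨G3, hG3⟩ : ∃ x : ℝ, x = ((1 - b - c - d) ^ 2 + b ^ 2 + c ^ 2 + d * ((1 - b - c - d) + b + c) - (1 / 2 + 3 / 2 * tau ^ 2)) := ⟨_, rfl⟩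
    obtain ⟨AB, hAB⟩ : ∃ x : ℝ, x = 1 - b - c - d - b := ⟨_, rfl⟩
    obtain ⟨BC, hBC⟩ : ∃ x : ℝ, x = b - c := ⟨_, rfl⟩
    have s1 : 0 ≤ G1 := by rw [hG1]; linarith
    have s2 : 0 ≤ G2 := by rw [hG2]; linarith
    have s3 : 0 < G3 := by rw [hG3]; linarith
    have hab' : 0 ≤ AB := by rw [hAB]; linarith
    have hbc' : 0 ≤ BC := by rw [hBC]; linarith
    have key : d * G3 + (6 - 9*tau) * (G1 * AB) + (11/2 - 27/2*tau) * (G1 * BC) + (2 - 9*tau) * (G1 * c) + (1/4 - 9/8*tau) * G2 + (9/8*tau) * (G2 * AB) + (1/2 - 9/4*tau) * (G2 * BC) + (2 + 9/8*tau) * (G2 * c) + (1/2 + 9/4*tau) * (G3 * BC) + (11/9 - 70/9*tau) * BC + (3/4 - 9/4*tau) * (d * d) + (5/4 - 9/2*tau) * (AB * (BC * BC)) + (6 - 27/2*tau) * (AB * (BC * c)) + (5/2 - 9*tau) * (AB * (BC * d)) + (11/4 - 45/4*tau) * (BC * (BC * c)) + (5/4 - 45/8*tau) * (BC * (BC * d))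 + (3/2 - 9/2*tau) * (BC * (c * c)) + (9/4*tau) * (c * (d * d)) + (9/8*tau) * (d * (d * d)) = 0 := by
      rw [hG1, hG2, hG3, hAB, hBC]
      linear_combination (tau + 7/8 * b * tau - 2 * c * tau - 9/16 * d * tau + 1/8 + 11/9 * b - 11/9 * c) * ht
    have T1 : 0 ≤ (6 - 9*tau) * (G1 * AB) := mul_nonneg (by linarith) (mul_nonneg s1 hab')
    have T2 : 0 ≤ (11/2 - 27/2*tau) * (G1 * BC) := mul_nonneg (by linarith) (mul_nonneg s1 hbc')
    have T3 : 0 ≤ (2 - 9*tau) * (G1 * c) := mul_nonneg (by linarith) (mul_nonneg s1 hc)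
    have T4 : 0 ≤ (1/4 - 9/8*tau) * G2 := mul_nonneg (by linarith) (s2)
    have T5 : 0 ≤ (9/8*tau) * (G2 * AB) := mul_nonneg (by linarith) (mul_nonneg s2 hab')
    have T6 : 0 ≤ (1/2 - 9/4*tau) * (G2 * BC) := mul_nonneg (by linarith) (mul_nonneg s2 hbc')
    have T7 : 0 ≤ (2 + 9/8*tau) * (G2 * c) := mul_nonneg (by linarith) (mul_nonneg s2 hc)
    have T8 : 0 ≤ (1/2 + 9/4*tau) * (G3 * BC) := mul_nonneg (by linarith) (mul_nonneg s3.le hbc')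
    have T9 : 0 ≤ (11/9 - 70/9*tau) * BC := mul_nonneg (by linarith) (hbc')
    have T10 : 0 ≤ (3/4 - 9/4*tau) * (d * d) := mul_nonneg (by linarith) (mul_nonneg hd hd)
    have T11 : 0 ≤ (5/4 - 9/2*tau) * (AB * (BC * BC)) := mul_nonneg (by linarith) (mul_nonneg hab' (mul_nonneg hbc' hbc'))
    have T12 : 0 ≤ (6 - 27/2*tau) * (AB * (BC * c)) := mul_nonneg (by linarith) (mul_nonneg hab' (mul_nonneg hbc' hc))
    have T13 : 0 ≤ (5/2 - 9*tau) * (AB * (BC * d)) := mul_nonneg (by linarith) (mul_nonneg hab' (mul_nonneg hbc' hd))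
    have T14 : 0 ≤ (11/4 - 45/4*tau) * (BC * (BC * c)) := mul_nonneg (by linarith) (mul_nonneg hbc' (mul_nonneg hbc' hc))
    have T15 : 0 ≤ (5/4 - 45/8*tau) * (BC * (BC * d)) := mul_nonneg (by linarith) (mul_nonneg hbc' (mul_nonneg hbc' hd))
    have T16 : 0 ≤ (3/2 - 9/2*tau) * (BC * (c * c)) := mul_nonneg (by linarith) (mul_nonneg hbc' (mul_nonneg hc hc))
    have T17 : 0 ≤ (9/4*tau) * (c * (d * d)) := mul_nonneg (by linarith) (mul_nonneg hc (mul_nonneg hd hd))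
    have T18 : 0 ≤ (9/8*tau) * (d * (d * d)) := mul_nonneg (by linarith) (mul_nonneg hd (mul_nonneg hd hd))
    have hdG3 : 0 < d * G3 := mul_pos hd0 s3
    linarith [key, hdG3, T1, T2, T3, T4, T5, T6, T7, T8, T9, T10, T11, T12, T13, T14, T15, T16, T17, T18]
end

section
/- Let τ = (4 − √7)/9 and let d be a real number with 0 ≤ d ≤ 1/3. Then 2(1 − d)·√(d² + 4τ²) ≥ 4τ + 2d² − d. -/
theorem final_inequality_fails (d : ℝ) (h0 : 0 ≤ d) (h1 : d ≤ 1 / 3) :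
    2 * (1 - d) * Real.sqrt (d ^ 2 + 4 * tau ^ 2) ≥ 4 * tau + 2 * d ^ 2 - d := by
  have hs7 : Real.sqrt 7 ^ 2 = 7 := Real.sq_sqrt (by norm_num)
  have hs7n : 0 ≤ Real.sqrt 7 := Real.sqrt_nonneg 7
  have hlt : Real.sqrt 7 < 2.646 := by nlinarith
  have hgt : 2.645 < Real.sqrt 7 := by nlinarith
  have htau : 9 * tau ^ 2 - 8 * tau + 1 = 0 := by
    unfold tau; field_simp; nlinarith
  have htl : 0.15 < tau := by unfold tau; nlinarith
  have htu : tau < 0.1506 := by unfold tau; nlinarith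
  have hsn : 0 ≤ Real.sqrt (d ^ 2 + 4 * tau ^ 2) := Real.sqrt_nonneg _
  have hs2 : Real.sqrt (d ^ 2 + 4 * tau ^ 2) ^ 2 = d ^ 2 + 4 * tau ^ 2 :=
    Real.sq_sqrt (by positivity)
  have P : 4 * (1 - d) ^ 2 * (d ^ 2 + 4 * tau ^ 2) ≥ (4 * tau + 2 * d ^ 2 - d) ^ 2 := by
    nlinarith [mul_nonneg h0 h0, mul_nonneg (mul_nonneg h0 h0) (sub_nonneg.2 h1),
      mul_nonneg h0 (sub_nonneg.2 h1), sq_nonneg (d - 1/3), sq_nonneg tau, htau]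
  rcases le_or_gt (4 * tau + 2 * d ^ 2 - d) 0 with h | h
  · have : 0 ≤ 2 * (1 - d) * Real.sqrt (d ^ 2 + 4 * tau ^ 2) := by
      apply mul_nonneg _ hsn; nlinarith
    linarith
  · nlinarith [P, hs2, hsn, h, mul_nonneg (mul_nonneg (by norm_num : (0:ℝ) ≤ 2) (by nlinarith : (0:ℝ) ≤ 1 - d)) hsn]
end

section
/- Let G₁, G₂, G₃ be simple graphs on a common set V of n vertices such that no pair of distinct vertices is adjacent in all three graphs. Call a 2-element set X ⊆ V a digon if e₁(X) + e₂(X) + e₃(X) = 2. Let M be a maximum-size collection of pairwise disjoint digons and let D be the set of vertices not covered by M. Then for every digon X ∈ M there is at most one vertex y ∈ D with e₁(X, {y}) + e₂(X, {y}) + e₃(X, {y}) = 4. -/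
/-- A digon: a 2-element vertex set inducing exactly two edges among `G₁, G₂, G₃`. -/
noncomputable def IsDigon {V : Type*} (G₁ G₂ G₃ : SimpleGraph V) (X : Set V) : Prop :=
  X.ncard = 2 ∧ edgesWithin G₁ X + edgesWithin G₂ X + edgesWithin G₃ X = 2

/-!
A pair of vertices carries at most two of the three possible edges, so a vertex
joined to the digon `X = {a, b}` by four edges forms a digon with each of `a` and `b`. If two
uncovered vertices `y ≠ y'` were fully joined to `X`, replacing `X` by the disjoint digons
`{a, y}` and `{b, y'}` would give a larger disjoint family of digons.
-/

section Exchange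

variable {α : Type*} {M : Set (Set α)} {X A B : Set α}

theorem Set.ncard_insert_insert_sdiff_singleton (hM : M.Finite) (hX : X ∈ M) (hAB : A ≠ B)
    (hA : A ∉ M) (hB : B ∉ M) : (insert A (insert B (M \ {X}))).ncard = M.ncard + 1 := by
  have hB' : B ∉ M \ {X} := fun h => hB h.1
  have hA' : A ∉ insert B (M \ {X}) := by
    rintro (h | h)
    exacts [hAB h, hA h.1]
  rw [Set.ncard_insert_of_notMem hA' (hM.sdiff.insert B),
    Set.ncard_insert_of_notMem hB' hM.sdiff, Set.ncard_sdiff_singleton_add_one hX hM]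

theorem Set.PairwiseDisjoint.insert_insert_sdiff_singleton (hM : M.PairwiseDisjoint id)
    (hAB : Disjoint A B) (hA : ∀ Z ∈ M \ {X}, Disjoint A Z)
    (hB : ∀ Z ∈ M \ {X}, Disjoint B Z) :
    (insert A (insert B (M \ {X}))).PairwiseDisjoint id := by
  refine ((hM.subset Set.sdiff_subset).insert fun Z hZ _ => hB Z hZ).insert ?_
  rintro Z (rfl | hZ) -
  exacts [hAB, hA Z hZ]

theorem Set.PairwiseDisjoint.disjoint_pair_of_mem {a y : α} (hM : M.PairwiseDisjoint id)
    (hX : X ∈ M) (ha : a ∈ X) (hy : ∀ Z ∈ M, y ∉ Z) {Z : Set α} (hZ : Z ∈ M \ {X}) :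
    Disjoint {a, y} Z := by
  have hXZ : Disjoint X Z := hM hX hZ.1 (Ne.symm hZ.2)
  simp only [Set.disjoint_insert_left, Set.disjoint_singleton_left]
  exact ⟨hXZ.notMem_of_mem_left ha, hy Z hZ.1⟩

end Exchange

section PairCounts

variable {V : Type*} {G G₁ G₂ G₃ : SimpleGraph V} {a b u v y : V}

theorem edgesWithin_pair_eq_ncard :
    edgesWithin G {u, v} = ({s(u, v)} ∩ G.edgeSet).ncard := by
  rw [edgesWithin, Set.inter_comm]
  congr 1
  ext e
  induction e with
  | _ x z =>
    simp only [Set.mem_ofPred_eq, Set.mem_inter_iff, Set.mem_singleton_iff,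
      SimpleGraph.mem_edgeSet, Sym2.mem_iff, Set.mem_insert_iff, Sym2.eq_iff]
    refine and_congr_right fun hxz => ⟨fun h => ?_, ?_⟩
    · have := hxz.ne
      have := h x (.inl rfl)
      have := h z (.inr rfl)
      grind
    · rintro (⟨rfl, rfl⟩ | ⟨rfl, rfl⟩) <;> simp

theorem edgesWithin_pair_of_adj (h : G.Adj u v) : edgesWithin G {u, v} = 1 := by
  rw [edgesWithin_pair_eq_ncard, Set.inter_eq_left.mpr (by simpa using h), Set.ncard_singleton]

theorem edgesWithin_pair_of_not_adj (h : ¬G.Adj u v) : edgesWithin G {u, v} = 0 := by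
  rw [edgesWithin_pair_eq_ncard, Set.singleton_inter_eq_empty.mpr (by simpa using h),
    Set.ncard_empty]

theorem edgesBetween_pair_singleton (hab : a ≠ b) :
    edgesBetween G {a, b} {y} = edgesWithin G {a, y} + edgesWithin G {b, y} := by
  have hne : s(a, y) ≠ s(b, y) := fun h => hab (Sym2.congr_left.mp h)
  rw [edgesWithin_pair_eq_ncard, edgesWithin_pair_eq_ncard, ← Set.ncard_union_eq,
    ← Set.union_inter_distrib_right, edgesBetween, Set.inter_comm]
  · congr 1
    ext e
    simp only [Set.mem_ofPred_eq, Set.mem_inter_iff, Set.mem_union, Set.mem_singleton_iff,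
      Set.mem_insert_iff]
    grind
  · exact Set.disjoint_singleton.mpr hne |>.mono Set.inter_subset_left Set.inter_subset_left

theorem edgesWithin_pair_sum_le_two (h : ¬(G₁.Adj u v ∧ G₂.Adj u v ∧ G₃.Adj u v)) :
    edgesWithin G₁ {u, v} + edgesWithin G₂ {u, v} + edgesWithin G₃ {u, v} ≤ 2 := by
  by_cases h₁ : G₁.Adj u v <;> by_cases h₂ : G₂.Adj u v <;> by_cases h₃ : G₃.Adj u v <;>
    simp_all [edgesWithin_pair_of_adj, edgesWithin_pair_of_not_adj]

theorem isDigon_pair_of_edgesBetween_eq_four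
    (hno3 : ∀ x z : V, ¬(G₁.Adj x z ∧ G₂.Adj x z ∧ G₃.Adj x z))
    (hab : a ≠ b) (hu : u ∈ ({a, b} : Set V)) (huy : u ≠ y)
    (h4 : edgesBetween G₁ {a, b} {y} + edgesBetween G₂ {a, b} {y} +
      edgesBetween G₃ {a, b} {y} = 4) :
    IsDigon G₁ G₂ G₃ {u, y} := by
  refine ⟨Set.ncard_pair huy, ?_⟩
  simp only [edgesBetween_pair_singleton hab] at h4
  have := edgesWithin_pair_sum_le_two (hno3 a y)
  have := edgesWithin_pair_sum_le_two (hno3 b y)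
  rcases hu with rfl | rfl <;> omega

end PairCounts

theorem at_most_one_fully_joined_uncovered_vertex {V : Type*} [Fintype V]
    (G₁ G₂ G₃ : SimpleGraph V)
    (hno3 : ∀ x y : V, ¬ (G₁.Adj x y ∧ G₂.Adj x y ∧ G₃.Adj x y))
    (M : Set (Set V)) (hdig : ∀ X ∈ M, IsDigon G₁ G₂ G₃ X)
    (hdisj : ∀ X ∈ M, ∀ Y ∈ M, X ≠ Y → Disjoint X Y)
    (hmax : ∀ M' : Set (Set V), (∀ X ∈ M', IsDigon G₁ G₂ G₃ X) →
      (∀ X ∈ M', ∀ Y ∈ M', X ≠ Y → Disjoint X Y) → M'.ncard ≤ M.ncard)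
    (D : Set V) (hD : D = {v : V | ∀ X ∈ M, v ∉ X})
    (X : Set V) (hXM : X ∈ M) (y y' : V) (hy : y ∈ D) (hy' : y' ∈ D)
    (h4 : edgesBetween G₁ X {y} + edgesBetween G₂ X {y} + edgesBetween G₃ X {y} = 4)
    (h4' : edgesBetween G₁ X {y'} + edgesBetween G₂ X {y'} + edgesBetween G₃ X {y'} = 4) :
    y = y' := by
  subst hD
  by_contra hyy'
  obtain ⟨a, b, hab, rfl⟩ := Set.ncard_eq_two.mp (hdig X hXM).1
  have hM : M.PairwiseDisjoint id := fun Z hZ W hW => hdisj Z hZ W hW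
  have hay : a ≠ y := fun h => hy _ hXM (h ▸ Set.mem_insert a {b})
  have hby : b ≠ y := fun h => hy _ hXM (h ▸ Set.mem_insert_of_mem a rfl)
  have hay' : a ≠ y' := fun h => hy' _ hXM (h ▸ Set.mem_insert a {b})
  have hby' : b ≠ y' := fun h => hy' _ hXM (h ▸ Set.mem_insert_of_mem a rfl)
  have hA := isDigon_pair_of_edgesBetween_eq_four hno3 hab (Set.mem_insert a {b}) hay h4
  have hB := isDigon_pair_of_edgesBetween_eq_four hno3 hab (Set.mem_insert_of_mem a rfl) hby' h4'
  have hAB : Disjoint ({a, y} : Set V) {b, y'} := by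
    simp [hab.symm, hby, hay'.symm, Ne.symm hyy']
  have hlarger := hmax _
    (by rintro Z (rfl | rfl | hZ); exacts [hA, hB, hdig Z hZ.1])
    (hM.insert_insert_sdiff_singleton hAB
      (fun Z => hM.disjoint_pair_of_mem hXM (Set.mem_insert a {b}) hy)
      (fun Z => hM.disjoint_pair_of_mem hXM (Set.mem_insert_of_mem a rfl) hy'))
  rw [Set.ncard_insert_insert_sdiff_singleton (Set.toFinite M) hXM
    (hAB.ne (Set.insert_nonempty a {y}).ne_empty)
    (fun h => hy _ h (Set.mem_insert_of_mem a rfl))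
    (fun h => hy' _ h (Set.mem_insert_of_mem b rfl))] at hlarger
  omega
end
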